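/- arXiv:2106.02173 — 14 statements merged into one kernel-verified Lean document; each statement's English description precedes it below -/
import Mathlib

section
/- Let G be a finite simple graph without isolated vertices, with m edges, minimum degree δ and maximum degree Δ, and let a < 0 be a real number. Then m/(2δ^a) ≤ ISD_a(G) ≤ m/(2Δ^a), and equality holds in either bound if and only if G is regular. -/
open Finset Real

/-- The variable inverse sum deg index
`ISD_a(G) = Σ_{uv ∈ E(G)} 1/(d_u^a + d_v^a)`. -/
noncomputable def ISD {V : Type*} [Fintype V] [DecidableEq V] (G : SimpleGraph V)
    [DecidableRel G.Adj] (a : ℝ) : ℝ :=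
  ∑ e ∈ G.edgeFinset,
    Sym2.lift ⟨fun u v => 1 / ((G.degree u : ℝ) ^ a + (G.degree v : ℝ) ^ a),
      fun u v => by simp [add_comm]⟩ e

private lemma isd_aux_min {a D x y : ℝ} (ha : a < 0) (hD : 0 < D) (hx : D ≤ x) (hy : D ≤ y) :
    1 / (2 * D ^ a) ≤ 1 / (x ^ a + y ^ a) ∧
      (1 / (x ^ a + y ^ a) = 1 / (2 * D ^ a) ↔ x = D ∧ y = D) := by
  have hxp : 0 < x := lt_of_lt_of_le hD hx
  have hyp : 0 < y := lt_of_lt_of_le hD hy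
  have hxa : 0 < x ^ a := Real.rpow_pos_of_pos hxp a
  have hya : 0 < y ^ a := Real.rpow_pos_of_pos hyp a
  have hDa : 0 < D ^ a := Real.rpow_pos_of_pos hD a
  have h1 : x ^ a ≤ D ^ a := Real.rpow_le_rpow_of_nonpos hD hx ha.le
  have h2 : y ^ a ≤ D ^ a := Real.rpow_le_rpow_of_nonpos hD hy ha.le
  have hsum : x ^ a + y ^ a ≤ 2 * D ^ a := by linarith
  refine ⟨one_div_le_one_div_of_le (by linarith) hsum, ?_, ?_⟩
  · intro h
    have hs : x ^ a + y ^ a = 2 * D ^ a := by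
      field_simp at h; linarith
    have hx' : x = D := by
      by_contra hne
      have h3 : D < x := lt_of_le_of_ne hx (Ne.symm hne)
      have := Real.rpow_lt_rpow_of_neg hD h3 ha
      linarith
    have hy' : y = D := by
      by_contra hne
      have h3 : D < y := lt_of_le_of_ne hy (Ne.symm hne)
      have := Real.rpow_lt_rpow_of_neg hD h3 ha
      linarith
    exact ⟨hx', hy'⟩
  · rintro ⟨rfl, rfl⟩; ring_nf

private lemma isd_aux_max {a D x y : ℝ} (ha : a < 0) (hx0 : 0 < x) (hy0 : 0 < y)
    (hx : x ≤ D) (hy : y ≤ D) :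
    1 / (x ^ a + y ^ a) ≤ 1 / (2 * D ^ a) ∧
      (1 / (x ^ a + y ^ a) = 1 / (2 * D ^ a) ↔ x = D ∧ y = D) := by
  have hD : 0 < D := lt_of_lt_of_le hx0 hx
  have hxa : 0 < x ^ a := Real.rpow_pos_of_pos hx0 a
  have hya : 0 < y ^ a := Real.rpow_pos_of_pos hy0 a
  have hDa : 0 < D ^ a := Real.rpow_pos_of_pos hD a
  have h1 : D ^ a ≤ x ^ a := Real.rpow_le_rpow_of_nonpos hx0 hx ha.le
  have h2 : D ^ a ≤ y ^ a := Real.rpow_le_rpow_of_nonpos hy0 hy ha.le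
  have hsum : 2 * D ^ a ≤ x ^ a + y ^ a := by linarith
  refine ⟨one_div_le_one_div_of_le (by linarith) hsum, ?_, ?_⟩
  · intro h
    have hs : x ^ a + y ^ a = 2 * D ^ a := by
      field_simp at h; linarith
    have hx' : x = D := by
      by_contra hne
      have h3 : x < D := lt_of_le_of_ne hx hne
      have := Real.rpow_lt_rpow_of_neg hx0 h3 ha
      linarith
    have hy' : y = D := by
      by_contra hne
      have h3 : y < D := lt_of_le_of_ne hy hne
      have := Real.rpow_lt_rpow_of_neg hy0 h3 ha
      linarith
    exact ⟨hx', hy'⟩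
  · rintro ⟨rfl, rfl⟩; ring_nf

theorem stmt_1 {V : Type*} [Fintype V] [DecidableEq V] [Nonempty V] (G : SimpleGraph V)
    [DecidableRel G.Adj] (hiso : ∀ v : V, 0 < G.degree v) (a : ℝ) (ha : a < 0) :
    (((G.edgeFinset.card : ℝ) / (2 * (G.minDegree : ℝ) ^ a) ≤ ISD G a ∧
      ISD G a ≤ (G.edgeFinset.card : ℝ) / (2 * (G.maxDegree : ℝ) ^ a)) ∧
    (ISD G a = (G.edgeFinset.card : ℝ) / (2 * (G.minDegree : ℝ) ^ a) ↔ ∃ k, ∀ v : V, G.degree v = k) ∧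
    (ISD G a = (G.edgeFinset.card : ℝ) / (2 * (G.maxDegree : ℝ) ^ a) ↔ ∃ k, ∀ v : V, G.degree v = k)) := by
  classical
  obtain ⟨vmin, hvmin⟩ := G.exists_minimal_degree_vertex
  obtain ⟨vmax, hvmax⟩ := G.exists_maximal_degree_vertex
  have hδpos : 0 < G.minDegree := hvmin ▸ hiso vmin
  have hΔpos : 0 < G.maxDegree := hvmax ▸ hiso vmax
  have hδR : (0:ℝ) < (G.minDegree : ℝ) := by exact_mod_cast hδpos
  set F : Sym2 V → ℝ := Sym2.lift ⟨fun u v => 1 / ((G.degree u : ℝ) ^ a + (G.degree v : ℝ) ^ a),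
      fun u v => by simp [add_comm]⟩ with hF
  set c₁ : ℝ := 1 / (2 * (G.minDegree : ℝ) ^ a) with hc₁
  set c₂ : ℝ := 1 / (2 * (G.maxDegree : ℝ) ^ a) with hc₂
  have keymin : ∀ u v : V, c₁ ≤ F s(u, v) ∧
      (F s(u, v) = c₁ ↔ G.degree u = G.minDegree ∧ G.degree v = G.minDegree) := by
    intro u v
    have h := isd_aux_min (x := (G.degree u : ℝ)) (y := (G.degree v : ℝ)) ha hδR
      (by exact_mod_cast G.minDegree_le_degree u) (by exact_mod_cast G.minDegree_le_degree v)
    simpa [hF, hc₁, Sym2.lift_mk, Nat.cast_inj] using h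
  have keymax : ∀ u v : V, F s(u, v) ≤ c₂ ∧
      (F s(u, v) = c₂ ↔ G.degree u = G.maxDegree ∧ G.degree v = G.maxDegree) := by
    intro u v
    have h := isd_aux_max (D := (G.maxDegree : ℝ)) (x := (G.degree u : ℝ))
      (y := (G.degree v : ℝ)) ha (by exact_mod_cast hiso u) (by exact_mod_cast hiso v)
      (by exact_mod_cast G.degree_le_maxDegree u) (by exact_mod_cast G.degree_le_maxDegree v)
    simpa [hF, hc₂, Sym2.lift_mk, Nat.cast_inj] using h
  have hISD : ISD G a = ∑ e ∈ G.edgeFinset, F e := rfl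
  have hsum₁ : ((G.edgeFinset.card : ℝ) / (2 * (G.minDegree : ℝ) ^ a)) = ∑ _e ∈ G.edgeFinset, c₁ := by
    rw [Finset.sum_const, nsmul_eq_mul, hc₁, mul_one_div]
  have hsum₂ : ((G.edgeFinset.card : ℝ) / (2 * (G.maxDegree : ℝ) ^ a)) = ∑ _e ∈ G.edgeFinset, c₂ := by
    rw [Finset.sum_const, nsmul_eq_mul, hc₂, mul_one_div]
  have hle₁ : ∀ e ∈ G.edgeFinset, c₁ ≤ F e := by
    intro e he
    induction e using Sym2.ind with
    | _ u v => exact (keymin u v).1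
  have hle₂ : ∀ e ∈ G.edgeFinset, F e ≤ c₂ := by
    intro e he
    induction e using Sym2.ind with
    | _ u v => exact (keymax u v).1
  have hedge : ∀ v : V, ∃ w : V, G.Adj v w := by
    intro v
    obtain ⟨w, hw⟩ := Finset.card_pos.mp (hiso v)
    exact ⟨w, (SimpleGraph.mem_neighborFinset G v w).mp hw⟩
  refine ⟨⟨?_, ?_⟩, ⟨?_, ?_⟩, ⟨?_, ?_⟩⟩
  · rw [hISD, hsum₁]; exact Finset.sum_le_sum hle₁
  · rw [hISD, hsum₂]; exact Finset.sum_le_sum hle₂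
  · -- min equality → regular
    intro h
    rw [hISD, hsum₁] at h
    have heq := (Finset.sum_eq_sum_iff_of_le hle₁).mp h.symm
    refine ⟨G.minDegree, fun v => ?_⟩
    obtain ⟨w, hw⟩ := hedge v
    have hmem : s(v, w) ∈ G.edgeFinset := SimpleGraph.mem_edgeFinset.mpr hw
    exact ((keymin v w).2.mp (heq _ hmem).symm).1
  · -- regular → min equality
    rintro ⟨k, hk⟩
    rw [hISD, hsum₁]
    refine Finset.sum_congr rfl ?_
    intro e he
    induction e using Sym2.ind with
    | _ u v =>
      have hδk : G.minDegree = k := by rw [hvmin, hk vmin]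
      exact (keymin u v).2.mpr ⟨by rw [hk u, hδk], by rw [hk v, hδk]⟩
  · -- max equality → regular
    intro h
    rw [hISD, hsum₂] at h
    have heq := (Finset.sum_eq_sum_iff_of_le hle₂).mp h
    refine ⟨G.maxDegree, fun v => ?_⟩
    obtain ⟨w, hw⟩ := hedge v
    have hmem : s(v, w) ∈ G.edgeFinset := SimpleGraph.mem_edgeFinset.mpr hw
    exact ((keymax v w).2.mp (heq _ hmem)).1
  · -- regular → max equality
    rintro ⟨k, hk⟩
    rw [hISD, hsum₂]
    refine Finset.sum_congr rfl ?_
    intro e he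
    induction e using Sym2.ind with
    | _ u v =>
      have hΔk : G.maxDegree = k := by rw [hvmax, hk vmax]
      exact (keymax u v).2.mpr ⟨by rw [hk u, hΔk], by rw [hk v, hΔk]⟩
end

section
/- Let G be a finite simple graph without isolated vertices, with minimum degree δ and maximum degree Δ, and let a > 0 be a real number. Then (1/2)·δ^a·R_{-a}(G) ≤ ISD_a(G) ≤ (1/2)·Δ^a·R_{-a}(G), and equality holds in either bound if and only if G is regular. -/
open Finset Real

/-- The general Randić index `R_α(G) = Σ_{uv ∈ E(G)} (d_u · d_v)^α`. -/
noncomputable def genRandic {V : Type*} [Fintype V] [DecidableEq V] (G : SimpleGraph V)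
    [DecidableRel G.Adj] (α : ℝ) : ℝ :=
  ∑ e ∈ G.edgeFinset,
    Sym2.lift ⟨fun u v => ((G.degree u : ℝ) * (G.degree v : ℝ)) ^ α,
      fun u v => by simp [mul_comm]⟩ e

private lemma lower_aux {m x y : ℝ} (hm : 0 < m) (hx : m ≤ x) (hy : m ≤ y) :
    1 / 2 * m * (x * y)⁻¹ ≤ 1 / (x + y) ∧
    (1 / 2 * m * (x * y)⁻¹ = 1 / (x + y) ↔ x = m ∧ y = m) := by
  have hx0 : 0 < x := hm.trans_le hx
  have hy0 : 0 < y := hm.trans_le hy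
  have hxy : 0 < x * y := mul_pos hx0 hy0
  have hs : 0 < x + y := by linarith
  have hineq : m * (x + y) ≤ 2 * (x * y) := by nlinarith
  constructor
  · rw [show 1/2 * m * (x*y)⁻¹ = m / (2 * (x*y)) by field_simp,
      div_le_div_iff₀ (by positivity) hs]
    nlinarith
  · constructor
    · intro h
      have h' : m * (x + y) = 2 * (x * y) := by
        field_simp at h
        nlinarith [h]
      have hxe : x ≤ m := by nlinarith [mul_nonneg hy0.le (sub_nonneg.2 hx)]
      have hye : y ≤ m := by nlinarith [mul_nonneg hx0.le (sub_nonneg.2 hy)]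
      exact ⟨le_antisymm hxe hx, le_antisymm hye hy⟩
    · rintro ⟨rfl, rfl⟩
      field_simp
      ring

private lemma upper_aux {M x y : ℝ} (hx0 : 0 < x) (hy0 : 0 < y) (hx : x ≤ M) (hy : y ≤ M) :
    1 / (x + y) ≤ 1 / 2 * M * (x * y)⁻¹ ∧
    (1 / (x + y) = 1 / 2 * M * (x * y)⁻¹ ↔ x = M ∧ y = M) := by
  have hxy : 0 < x * y := mul_pos hx0 hy0
  have hs : 0 < x + y := by linarith
  have hM : 0 < M := hx0.trans_le hx
  have hineq : 2 * (x * y) ≤ M * (x + y) := by nlinarith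
  constructor
  · rw [show 1/2 * M * (x*y)⁻¹ = M / (2 * (x*y)) by field_simp,
      div_le_div_iff₀ hs (by positivity)]
    nlinarith
  · constructor
    · intro h
      have h' : M * (x + y) = 2 * (x * y) := by
        field_simp at h
        nlinarith [h]
      have hxe : M ≤ x := by nlinarith [mul_nonneg hy0.le (sub_nonneg.2 hx)]
      have hye : M ≤ y := by nlinarith [mul_nonneg hx0.le (sub_nonneg.2 hy)]
      exact ⟨le_antisymm hx hxe, le_antisymm hy hye⟩
    · rintro ⟨rfl, rfl⟩
      field_simp
      ring

private lemma rpow_nat_eq_iff {m n : ℕ} {a : ℝ} (ha : 0 < a) (h : m ≤ n) :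
    (n : ℝ) ^ a = (m : ℝ) ^ a ↔ n = m := by
  constructor
  · intro he
    by_contra hne
    have hlt : (m : ℝ) < n := by exact_mod_cast lt_of_le_of_ne h (Ne.symm hne)
    have := Real.rpow_lt_rpow (by positivity) hlt ha
    linarith
  · rintro rfl; rfl

private lemma rpow_nat_eq_iff' {m n : ℕ} {a : ℝ} (ha : 0 < a) (h : n ≤ m) :
    (n : ℝ) ^ a = (m : ℝ) ^ a ↔ n = m := by
  rw [eq_comm, rpow_nat_eq_iff ha h, eq_comm]

private noncomputable def Ff {V : Type*} [Fintype V] [DecidableEq V] (G : SimpleGraph V)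
    [DecidableRel G.Adj] (a : ℝ) : Sym2 V → ℝ :=
  Sym2.lift ⟨fun u v => 1 / ((G.degree u : ℝ) ^ a + (G.degree v : ℝ) ^ a),
      fun u v => by simp [add_comm]⟩

private noncomputable def Rf {V : Type*} [Fintype V] [DecidableEq V] (G : SimpleGraph V)
    [DecidableRel G.Adj] (α : ℝ) : Sym2 V → ℝ :=
  Sym2.lift ⟨fun u v => ((G.degree u : ℝ) * (G.degree v : ℝ)) ^ α,
      fun u v => by simp [mul_comm]⟩

private lemma keyL {V : Type*} [Fintype V] [DecidableEq V] [Nonempty V] (G : SimpleGraph V)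
    [DecidableRel G.Adj] {a : ℝ} (ha : 0 < a) (hδ : 0 < G.minDegree) (u v : V) :
    1 / 2 * (G.minDegree : ℝ) ^ a * Rf G (-a) s(u, v) ≤ Ff G a s(u, v) ∧
    (1 / 2 * (G.minDegree : ℝ) ^ a * Rf G (-a) s(u, v) = Ff G a s(u, v) ↔
      G.degree u = G.minDegree ∧ G.degree v = G.minDegree) := by
  have hdu := G.minDegree_le_degree u
  have hdv := G.minDegree_le_degree v
  have hm : (0 : ℝ) < (G.minDegree : ℝ) ^ a := Real.rpow_pos_of_pos (by exact_mod_cast hδ) a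
  have hxm : ((G.minDegree : ℝ)) ^ a ≤ (G.degree u : ℝ) ^ a :=
    Real.rpow_le_rpow (by positivity) (by exact_mod_cast hdu) ha.le
  have hym : ((G.minDegree : ℝ)) ^ a ≤ (G.degree v : ℝ) ^ a :=
    Real.rpow_le_rpow (by positivity) (by exact_mod_cast hdv) ha.le
  have hdu0 : (0:ℝ) < (G.degree u : ℝ) := by
    exact_mod_cast lt_of_lt_of_le hδ hdu
  have hdv0 : (0:ℝ) < (G.degree v : ℝ) := by
    exact_mod_cast lt_of_lt_of_le hδ hdv
  have hR : Rf G (-a) s(u, v) = ((G.degree u : ℝ) ^ a * (G.degree v : ℝ) ^ a)⁻¹ := by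
    show ((G.degree u : ℝ) * (G.degree v : ℝ)) ^ (-a) = _
    rw [Real.mul_rpow hdu0.le hdv0.le, Real.rpow_neg hdu0.le, Real.rpow_neg hdv0.le, ← mul_inv]
  have hF : Ff G a s(u, v) = 1 / ((G.degree u : ℝ) ^ a + (G.degree v : ℝ) ^ a) := rfl
  rw [hR, hF]
  obtain ⟨h1, h2⟩ := lower_aux hm hxm hym
  refine ⟨h1, h2.trans ?_⟩
  rw [rpow_nat_eq_iff ha hdu, rpow_nat_eq_iff ha hdv]

private lemma keyU {V : Type*} [Fintype V] [DecidableEq V] [Nonempty V] (G : SimpleGraph V)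
    [DecidableRel G.Adj] {a : ℝ} (ha : 0 < a) (hδ : 0 < G.minDegree) (u v : V) :
    Ff G a s(u, v) ≤ 1 / 2 * (G.maxDegree : ℝ) ^ a * Rf G (-a) s(u, v) ∧
    (Ff G a s(u, v) = 1 / 2 * (G.maxDegree : ℝ) ^ a * Rf G (-a) s(u, v) ↔
      G.degree u = G.maxDegree ∧ G.degree v = G.maxDegree) := by
  have hdu := G.degree_le_maxDegree u
  have hdv := G.degree_le_maxDegree v
  have hdu0' : 0 < G.degree u := lt_of_lt_of_le hδ (G.minDegree_le_degree u)
  have hdv0' : 0 < G.degree v := lt_of_lt_of_le hδ (G.minDegree_le_degree v)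
  have hx0 : (0 : ℝ) < (G.degree u : ℝ) ^ a :=
    Real.rpow_pos_of_pos (by exact_mod_cast hdu0') a
  have hy0 : (0 : ℝ) < (G.degree v : ℝ) ^ a :=
    Real.rpow_pos_of_pos (by exact_mod_cast hdv0') a
  have hxM : ((G.degree u : ℝ)) ^ a ≤ (G.maxDegree : ℝ) ^ a :=
    Real.rpow_le_rpow (by positivity) (by exact_mod_cast hdu) ha.le
  have hyM : ((G.degree v : ℝ)) ^ a ≤ (G.maxDegree : ℝ) ^ a :=
    Real.rpow_le_rpow (by positivity) (by exact_mod_cast hdv) ha.le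
  have hdu0 : (0:ℝ) < (G.degree u : ℝ) := by exact_mod_cast hdu0'
  have hdv0 : (0:ℝ) < (G.degree v : ℝ) := by exact_mod_cast hdv0'
  have hR : Rf G (-a) s(u, v) = ((G.degree u : ℝ) ^ a * (G.degree v : ℝ) ^ a)⁻¹ := by
    show ((G.degree u : ℝ) * (G.degree v : ℝ)) ^ (-a) = _
    rw [Real.mul_rpow hdu0.le hdv0.le, Real.rpow_neg hdu0.le, Real.rpow_neg hdv0.le, ← mul_inv]
  have hF : Ff G a s(u, v) = 1 / ((G.degree u : ℝ) ^ a + (G.degree v : ℝ) ^ a) := rfl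
  rw [hR, hF]
  obtain ⟨h1, h2⟩ := upper_aux hx0 hy0 hxM hyM
  refine ⟨h1, h2.trans ?_⟩
  rw [rpow_nat_eq_iff' ha hdu, rpow_nat_eq_iff' ha hdv]

theorem stmt_2 {V : Type*} [Fintype V] [DecidableEq V] [Nonempty V] (G : SimpleGraph V)
    [DecidableRel G.Adj] (hiso : ∀ v : V, 0 < G.degree v) (a : ℝ) (ha : 0 < a) :
    ((1 / 2 * (G.minDegree : ℝ) ^ a * genRandic G (-a) ≤ ISD G a ∧
      ISD G a ≤ 1 / 2 * (G.maxDegree : ℝ) ^ a * genRandic G (-a)) ∧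
    (ISD G a = 1 / 2 * (G.minDegree : ℝ) ^ a * genRandic G (-a) ↔ ∃ k, ∀ v : V, G.degree v = k) ∧
    (ISD G a = 1 / 2 * (G.maxDegree : ℝ) ^ a * genRandic G (-a) ↔ ∃ k, ∀ v : V, G.degree v = k)) := by
  have hδ : 0 < G.minDegree := by
    obtain ⟨v, hv⟩ := G.exists_minimal_degree_vertex
    rw [hv]; exact hiso v
  have hISD : ISD G a = ∑ e ∈ G.edgeFinset, Ff G a e := rfl
  have hRd : genRandic G (-a) = ∑ e ∈ G.edgeFinset, Rf G (-a) e := rfl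
  have hLsum : 1 / 2 * (G.minDegree : ℝ) ^ a * genRandic G (-a) =
      ∑ e ∈ G.edgeFinset, 1 / 2 * (G.minDegree : ℝ) ^ a * Rf G (-a) e := by
    rw [hRd, Finset.mul_sum]
  have hUsum : 1 / 2 * (G.maxDegree : ℝ) ^ a * genRandic G (-a) =
      ∑ e ∈ G.edgeFinset, 1 / 2 * (G.maxDegree : ℝ) ^ a * Rf G (-a) e := by
    rw [hRd, Finset.mul_sum]
  have hL : ∀ e ∈ G.edgeFinset, 1 / 2 * (G.minDegree : ℝ) ^ a * Rf G (-a) e ≤ Ff G a e := by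
    intro e he
    induction e using Sym2.ind with
    | _ u v => exact (keyL G ha hδ u v).1
  have hU : ∀ e ∈ G.edgeFinset, Ff G a e ≤ 1 / 2 * (G.maxDegree : ℝ) ^ a * Rf G (-a) e := by
    intro e he
    induction e using Sym2.ind with
    | _ u v => exact (keyU G ha hδ u v).1
  have exists_adj : ∀ v : V, ∃ w, G.Adj v w := by
    intro v
    have h := hiso v
    rw [← SimpleGraph.card_neighborFinset_eq_degree] at h
    obtain ⟨w, hw⟩ := Finset.card_pos.mp h
    exact ⟨w, (SimpleGraph.mem_neighborFinset G v w).mp hw⟩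
  refine ⟨⟨?_, ?_⟩, ?_, ?_⟩
  · rw [hISD, hLsum]; exact Finset.sum_le_sum hL
  · rw [hISD, hUsum]; exact Finset.sum_le_sum hU
  · rw [hISD, hLsum, eq_comm, Finset.sum_eq_sum_iff_of_le hL]
    constructor
    · intro h
      refine ⟨G.minDegree, fun v => ?_⟩
      obtain ⟨w, hw⟩ := exists_adj v
      have he : s(v, w) ∈ G.edgeFinset := by
        rw [SimpleGraph.mem_edgeFinset]; exact hw
      exact ((keyL G ha hδ v w).2.1 (h _ he)).1
    · rintro ⟨k, hk⟩ e he
      have hδk : G.minDegree = k := by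
        obtain ⟨w, hw⟩ := G.exists_minimal_degree_vertex
        rw [hw, hk w]
      induction e using Sym2.ind with
      | _ u v => exact (keyL G ha hδ u v).2.2 ⟨by rw [hk, hδk], by rw [hk, hδk]⟩
  · rw [hISD, hUsum, Finset.sum_eq_sum_iff_of_le hU]
    constructor
    · intro h
      refine ⟨G.maxDegree, fun v => ?_⟩
      obtain ⟨w, hw⟩ := exists_adj v
      have he : s(v, w) ∈ G.edgeFinset := by
        rw [SimpleGraph.mem_edgeFinset]; exact hw
      exact ((keyU G ha hδ v w).2.1 (h _ he)).1
    · rintro ⟨k, hk⟩ e he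
      have hΔk : G.maxDegree = k := by
        obtain ⟨w, hw⟩ := G.exists_maximal_degree_vertex
        rw [hw, hk w]
      induction e using Sym2.ind with
      | _ u v => exact (keyU G ha hδ u v).2.2 ⟨by rw [hk, hΔk], by rw [hk, hΔk]⟩
end

section
/- Let G be a finite simple graph without isolated vertices, with minimum degree δ and maximum degree Δ, and let a < 0 be a real number. Then (1/2)·Δ^a·R_{-a}(G) ≤ ISD_a(G) ≤ (1/2)·δ^a·R_{-a}(G), and equality holds in either bound if and only if G is regular. -/
open Finset Real

private lemma aux_id {a x y : ℝ} (hx : 0 < x) (hy : 0 < y) :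
    1/(x^a + y^a) = (x*y)^(-a)/(x^(-a) + y^(-a)) := by
  have h1 : x^(-a) * x^a = 1 := by rw [← Real.rpow_add hx]; simp
  have h2 : y^(-a) * y^a = 1 := by rw [← Real.rpow_add hy]; simp
  have hxa : 0 < x^a := Real.rpow_pos_of_pos hx a
  have hya : 0 < y^a := Real.rpow_pos_of_pos hy a
  have hxna : 0 < x^(-a) := Real.rpow_pos_of_pos hx _
  have hyna : 0 < y^(-a) := Real.rpow_pos_of_pos hy _
  rw [Real.mul_rpow hx.le hy.le, div_eq_div_iff (by positivity) (by positivity)]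
  linear_combination -(y^(-a)*h1) - x^(-a)*h2

private lemma keyMax {a x y D : ℝ} (hx : 0 < x) (hy : 0 < y) (hD : 0 < D)
    (h1 : x^(-a) ≤ D^(-a)) (h2 : y^(-a) ≤ D^(-a)) :
    1/2*D^a*(x*y)^(-a) ≤ 1/(x^a + y^a) ∧
    (1/(x^a + y^a) = 1/2*D^a*(x*y)^(-a) ↔ (x^(-a) = D^(-a) ∧ y^(-a) = D^(-a))) := by
  have hpr : 0 < (x*y)^(-a) := Real.rpow_pos_of_pos (mul_pos hx hy) _
  have hDa : 0 < D^a := Real.rpow_pos_of_pos hD a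
  have hDna : 0 < D^(-a) := Real.rpow_pos_of_pos hD _
  have hxna : 0 < x^(-a) := Real.rpow_pos_of_pos hx _
  have hyna : 0 < y^(-a) := Real.rpow_pos_of_pos hy _
  have hden : 0 < x^(-a) + y^(-a) := by positivity
  have hc : 1/2*D^a*(x*y)^(-a) = (x*y)^(-a)/(2*D^(-a)) := by
    rw [Real.rpow_neg hD.le]; field_simp
  rw [aux_id hx hy, hc]
  refine ⟨?_, ?_, ?_⟩
  · gcongr
    linarith
  · intro h
    have h' := (div_eq_div_iff (ne_of_gt hden) (by positivity)).mp h
    have h3 : 2*D^(-a) = x^(-a) + y^(-a) :=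
      mul_left_cancel₀ (ne_of_gt hpr) (by linarith [h'])
    constructor <;> linarith
  · rintro ⟨e1, e2⟩; rw [e1, e2]; ring

private lemma keyMin {a x y D : ℝ} (hx : 0 < x) (hy : 0 < y) (hD : 0 < D)
    (h1 : D^(-a) ≤ x^(-a)) (h2 : D^(-a) ≤ y^(-a)) :
    1/(x^a + y^a) ≤ 1/2*D^a*(x*y)^(-a) ∧
    (1/(x^a + y^a) = 1/2*D^a*(x*y)^(-a) ↔ (x^(-a) = D^(-a) ∧ y^(-a) = D^(-a))) := by
  have hpr : 0 < (x*y)^(-a) := Real.rpow_pos_of_pos (mul_pos hx hy) _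
  have hDa : 0 < D^a := Real.rpow_pos_of_pos hD a
  have hDna : 0 < D^(-a) := Real.rpow_pos_of_pos hD _
  have hxna : 0 < x^(-a) := Real.rpow_pos_of_pos hx _
  have hyna : 0 < y^(-a) := Real.rpow_pos_of_pos hy _
  have hden : 0 < x^(-a) + y^(-a) := by positivity
  have hc : 1/2*D^a*(x*y)^(-a) = (x*y)^(-a)/(2*D^(-a)) := by
    rw [Real.rpow_neg hD.le]; field_simp
  rw [aux_id hx hy, hc]
  refine ⟨?_, ?_, ?_⟩
  · gcongr
    linarith
  · intro h
    have h' := (div_eq_div_iff (ne_of_gt hden) (by positivity)).mp h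
    have h3 : 2*D^(-a) = x^(-a) + y^(-a) :=
      mul_left_cancel₀ (ne_of_gt hpr) (by linarith [h'])
    constructor <;> linarith
  · rintro ⟨e1, e2⟩; rw [e1, e2]; ring

theorem stmt_3 {V : Type*} [Fintype V] [DecidableEq V] [Nonempty V] (G : SimpleGraph V)
    [DecidableRel G.Adj] (hiso : ∀ v : V, 0 < G.degree v) (a : ℝ) (ha : a < 0) :
    ((1 / 2 * (G.maxDegree : ℝ) ^ a * genRandic G (-a) ≤ ISD G a ∧
      ISD G a ≤ 1 / 2 * (G.minDegree : ℝ) ^ a * genRandic G (-a)) ∧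
    (ISD G a = 1 / 2 * (G.maxDegree : ℝ) ^ a * genRandic G (-a) ↔ ∃ k, ∀ v : V, G.degree v = k) ∧
    (ISD G a = 1 / 2 * (G.minDegree : ℝ) ^ a * genRandic G (-a) ↔ ∃ k, ∀ v : V, G.degree v = k)) := by
  have hna : 0 < -a := by linarith
  have hΔnat : 0 < G.maxDegree :=
    lt_of_lt_of_le (hiso (Classical.arbitrary V)) (G.degree_le_maxDegree _)
  have hδnat : 0 < G.minDegree := by
    obtain ⟨v, hv⟩ := G.exists_minimal_degree_vertex
    rw [hv]; exact hiso v
  have hΔ : (0:ℝ) < (G.maxDegree : ℝ) := by exact_mod_cast hΔnat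
  have hδ : (0:ℝ) < (G.minDegree : ℝ) := by exact_mod_cast hδnat
  have hdeg : ∀ v : V, (0:ℝ) < (G.degree v : ℝ) := fun v => by exact_mod_cast hiso v
  -- degree bounds in rpow form
  have hbΔ : ∀ v : V, ((G.degree v : ℝ))^(-a) ≤ ((G.maxDegree : ℝ))^(-a) := fun v =>
    Real.rpow_le_rpow (hdeg v).le (by exact_mod_cast G.degree_le_maxDegree v) hna.le
  have hbδ : ∀ v : V, ((G.minDegree : ℝ))^(-a) ≤ ((G.degree v : ℝ))^(-a) := fun v =>
    Real.rpow_le_rpow hδ.le (by exact_mod_cast G.minDegree_le_degree v) hna.le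
  -- per-edge inequalities
  have hMax : ∀ e ∈ G.edgeFinset,
      1 / 2 * (G.maxDegree : ℝ) ^ a *
        Sym2.lift ⟨fun u v => ((G.degree u : ℝ) * (G.degree v : ℝ)) ^ (-a),
          fun u v => by simp [mul_comm]⟩ e ≤
      Sym2.lift ⟨fun u v => 1 / ((G.degree u : ℝ) ^ a + (G.degree v : ℝ) ^ a),
          fun u v => by simp [add_comm]⟩ e := by
    intro e
    induction e using Sym2.ind with
    | _ u v =>
      intro _
      simp only [Sym2.lift_mk]
      exact (keyMax (hdeg u) (hdeg v) hΔ (hbΔ u) (hbΔ v)).1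
  have hMin : ∀ e ∈ G.edgeFinset,
      Sym2.lift ⟨fun u v => 1 / ((G.degree u : ℝ) ^ a + (G.degree v : ℝ) ^ a),
          fun u v => by simp [add_comm]⟩ e ≤
      1 / 2 * (G.minDegree : ℝ) ^ a *
        Sym2.lift ⟨fun u v => ((G.degree u : ℝ) * (G.degree v : ℝ)) ^ (-a),
          fun u v => by simp [mul_comm]⟩ e := by
    intro e
    induction e using Sym2.ind with
    | _ u v =>
      intro _
      simp only [Sym2.lift_mk]
      exact (keyMin (hdeg u) (hdeg v) hδ (hbδ u) (hbδ v)).1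
  have hRmax : 1 / 2 * (G.maxDegree : ℝ) ^ a * genRandic G (-a) =
      ∑ e ∈ G.edgeFinset, 1 / 2 * (G.maxDegree : ℝ) ^ a *
        Sym2.lift ⟨fun u v => ((G.degree u : ℝ) * (G.degree v : ℝ)) ^ (-a),
          fun u v => by simp [mul_comm]⟩ e := by
    rw [genRandic, Finset.mul_sum]
  have hRmin : 1 / 2 * (G.minDegree : ℝ) ^ a * genRandic G (-a) =
      ∑ e ∈ G.edgeFinset, 1 / 2 * (G.minDegree : ℝ) ^ a *
        Sym2.lift ⟨fun u v => ((G.degree u : ℝ) * (G.degree v : ℝ)) ^ (-a),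
          fun u v => by simp [mul_comm]⟩ e := by
    rw [genRandic, Finset.mul_sum]
  have hineq1 : 1 / 2 * (G.maxDegree : ℝ) ^ a * genRandic G (-a) ≤ ISD G a := by
    rw [hRmax, ISD]; exact Finset.sum_le_sum hMax
  have hineq2 : ISD G a ≤ 1 / 2 * (G.minDegree : ℝ) ^ a * genRandic G (-a) := by
    rw [hRmin, ISD]; exact Finset.sum_le_sum hMin
  -- injectivity helper: degree equals D when rpows agree
  have hinj : ∀ (x D : ℝ), 0 < x → 0 < D → x^(-a) = D^(-a) → x = D := by
    intro x D hx hD h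
    exact Real.rpow_left_injOn (ne_of_gt hna) hx.le hD.le h
  refine ⟨⟨hineq1, hineq2⟩, ?_, ?_⟩
  · -- max equality iff regular
    rw [hRmax, ISD, eq_comm, Finset.sum_eq_sum_iff_of_le hMax]
    constructor
    · intro h
      refine ⟨G.maxDegree, fun v => ?_⟩
      obtain ⟨u, hu⟩ := Finset.card_pos.mp
        (by rw [G.card_neighborFinset_eq_degree]; exact hiso v)
      rw [SimpleGraph.mem_neighborFinset] at hu
      have he : s(v, u) ∈ G.edgeFinset := by
        rw [SimpleGraph.mem_edgeFinset, SimpleGraph.mem_edgeSet]; exact hu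
      have := h _ he
      simp only [Sym2.lift_mk] at this
      have heq := ((keyMax (hdeg v) (hdeg u) hΔ (hbΔ v) (hbΔ u)).2.mp this.symm).1
      exact_mod_cast hinj _ _ (hdeg v) hΔ heq
    · rintro ⟨k, hk⟩ e he
      induction e using Sym2.ind with
      | _ u v =>
        obtain ⟨w, hw⟩ := G.exists_maximal_degree_vertex
        have hΔk : (G.maxDegree : ℝ) = (k : ℝ) := by rw [hw, hk w]
        simp only [Sym2.lift_mk]
        refine ((keyMax (hdeg u) (hdeg v) hΔ (hbΔ u) (hbΔ v)).2.mpr ⟨?_, ?_⟩).symm <;>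
          rw [hk, hΔk]
  · -- min equality iff regular
    rw [hRmin, ISD, Finset.sum_eq_sum_iff_of_le hMin]
    constructor
    · intro h
      refine ⟨G.minDegree, fun v => ?_⟩
      obtain ⟨u, hu⟩ := Finset.card_pos.mp
        (by rw [G.card_neighborFinset_eq_degree]; exact hiso v)
      rw [SimpleGraph.mem_neighborFinset] at hu
      have he : s(v, u) ∈ G.edgeFinset := by
        rw [SimpleGraph.mem_edgeFinset, SimpleGraph.mem_edgeSet]; exact hu
      have := h _ he
      simp only [Sym2.lift_mk] at this
      have heq := ((keyMin (hdeg v) (hdeg u) hδ (hbδ v) (hbδ u)).2.mp this).1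
      exact_mod_cast hinj _ _ (hdeg v) hδ heq
    · rintro ⟨k, hk⟩ e he
      induction e using Sym2.ind with
      | _ u v =>
        obtain ⟨w, hw⟩ := G.exists_minimal_degree_vertex
        have hδk : (G.minDegree : ℝ) = (k : ℝ) := by rw [hw, hk w]
        simp only [Sym2.lift_mk]
        refine (keyMin (hdeg u) (hdeg v) hδ (hbδ u) (hbδ v)).2.mpr ⟨?_, ?_⟩ <;>
          rw [hk, hδk]
end

section
/- Let G be a finite simple graph without isolated vertices, with minimum degree δ and maximum degree Δ, and let a > 0 be a real number. Then Δ^{-2a}·ISD_{-a}(G) ≤ ISD_a(G) ≤ δ^{-2a}·ISD_{-a}(G), and equality holds in either bound if and only if G is regular. -/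
/-! On an edge `uv`, `1 / (d_u^{-a} + d_v^{-a}) = (d_u d_v)^a / (d_u^a + d_v^a)`, so `c^{-2a}` times
the `ISD_{-a}`-term of `uv` is `(d_u d_v / c²)^a` times its `ISD_a`-term. For `c = Δ` this factor
is at most `1`, for `c = δ` at least `1`, and it equals `1` iff both endpoints have degree `c`.
Summing over the edges gives the bounds; equality forces every edge to have both endpoints of
degree `c`, which without isolated vertices means that `G` is `c`-regular. -/

open Finset Real

section RpowRatio

variable {P Q t a : ℝ}

lemma rpow_div_rpow_mul_le_self_iff (hP : 0 ≤ P) (hQ : 0 < Q) (ht : 0 < t) (ha : 0 < a) :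
    P ^ a / Q ^ a * t ≤ t ↔ P ≤ Q := by
  rw [mul_le_iff_le_one_left ht, div_le_one (rpow_pos_of_pos hQ a), rpow_le_rpow_iff hP hQ.le ha]

lemma le_rpow_div_rpow_mul_self_iff (hP : 0 ≤ P) (hQ : 0 < Q) (ht : 0 < t) (ha : 0 < a) :
    t ≤ P ^ a / Q ^ a * t ↔ Q ≤ P := by
  rw [le_mul_iff_one_le_left ht, one_le_div (rpow_pos_of_pos hQ a),
    rpow_le_rpow_iff hQ.le hP ha]

lemma rpow_div_rpow_mul_eq_self_iff (hP : 0 ≤ P) (hQ : 0 < Q) (ht : 0 < t) (ha : a ≠ 0) :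
    P ^ a / Q ^ a * t = t ↔ P = Q := by
  rw [mul_eq_right₀ ht.ne', div_eq_one_iff_eq (rpow_pos_of_pos hQ a).ne',
    rpow_left_inj hP hQ.le ha]

end RpowRatio

namespace SimpleGraph

variable {V : Type*} [Fintype V] (G : SimpleGraph V) [DecidableRel G.Adj]

noncomputable def isdEdgeTerm (a : ℝ) : Sym2 V → ℝ :=
  Sym2.lift ⟨fun u v => 1 / ((G.degree u : ℝ) ^ a + (G.degree v : ℝ) ^ a),
    fun u v => by simp [add_comm]⟩

lemma ISD_eq_sum_isdEdgeTerm [DecidableEq V] (a : ℝ) :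
    ISD G a = ∑ e ∈ G.edgeFinset, G.isdEdgeTerm a e := rfl

lemma forall_mem_edgeFinset_iff {p : Sym2 V → Prop} :
    (∀ e ∈ G.edgeFinset, p e) ↔ ∀ u v, G.Adj u v → p s(u, v) := by
  simp [Sym2.forall]

variable {G}

lemma isdEdgeTerm_pos {u v : V} (h : G.Adj u v) (a : ℝ) : 0 < G.isdEdgeTerm a s(u, v) := by
  have hu := h.degree_pos_left
  have hv := h.degree_pos_right
  simp only [isdEdgeTerm, Sym2.lift_mk]
  positivity

lemma rpow_neg_two_mul_mul_isdEdgeTerm_neg {u v : V} (h : G.Adj u v) (a : ℝ) (c : ℕ) :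
    (c : ℝ) ^ (-(2 * a)) * G.isdEdgeTerm (-a) s(u, v) =
      ((G.degree u * G.degree v : ℕ) : ℝ) ^ a / ((c ^ 2 : ℕ) : ℝ) ^ a *
        G.isdEdgeTerm a s(u, v) := by
  have hu : (0 : ℝ) < G.degree u := Nat.cast_pos.2 h.degree_pos_left
  have hv : (0 : ℝ) < G.degree v := Nat.cast_pos.2 h.degree_pos_right
  simp only [isdEdgeTerm, Sym2.lift_mk, rpow_neg (Nat.cast_nonneg _), Nat.cast_mul, Nat.cast_pow,
    mul_rpow hu.le hv.le]
  rw [mul_comm 2 a, rpow_mul (Nat.cast_nonneg _), ← rpow_natCast,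
    ← rpow_mul (Nat.cast_nonneg _), ← rpow_mul (Nat.cast_nonneg _)]
  field_simp
  ring_nf

variable {a : ℝ} {c : ℕ}

lemma rpow_neg_two_mul_mul_isdEdgeTerm_neg_le_iff {u v : V} (h : G.Adj u v) (ha : 0 < a)
    (hc : 0 < c) :
    (c : ℝ) ^ (-(2 * a)) * G.isdEdgeTerm (-a) s(u, v) ≤ G.isdEdgeTerm a s(u, v) ↔
      G.degree u * G.degree v ≤ c ^ 2 := by
  rw [rpow_neg_two_mul_mul_isdEdgeTerm_neg h, rpow_div_rpow_mul_le_self_iff (by positivity)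
    (by positivity) (isdEdgeTerm_pos h a) ha, Nat.cast_le]

lemma isdEdgeTerm_le_rpow_neg_two_mul_mul_iff {u v : V} (h : G.Adj u v) (ha : 0 < a)
    (hc : 0 < c) :
    G.isdEdgeTerm a s(u, v) ≤ (c : ℝ) ^ (-(2 * a)) * G.isdEdgeTerm (-a) s(u, v) ↔
      c ^ 2 ≤ G.degree u * G.degree v := by
  rw [rpow_neg_two_mul_mul_isdEdgeTerm_neg h, le_rpow_div_rpow_mul_self_iff (by positivity)
    (by positivity) (isdEdgeTerm_pos h a) ha, Nat.cast_le]

lemma rpow_neg_two_mul_mul_isdEdgeTerm_neg_eq_iff {u v : V} (h : G.Adj u v) (ha : a ≠ 0)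
    (hc : 0 < c) :
    (c : ℝ) ^ (-(2 * a)) * G.isdEdgeTerm (-a) s(u, v) = G.isdEdgeTerm a s(u, v) ↔
      G.degree u * G.degree v = c ^ 2 := by
  rw [rpow_neg_two_mul_mul_isdEdgeTerm_neg h, rpow_div_rpow_mul_eq_self_iff (by positivity)
    (by positivity) (isdEdgeTerm_pos h a) ha, Nat.cast_inj]

lemma degree_mul_degree_le_maxDegree_sq (u v : V) :
    G.degree u * G.degree v ≤ G.maxDegree ^ 2 :=
  sq G.maxDegree ▸ Nat.mul_le_mul (G.degree_le_maxDegree u) (G.degree_le_maxDegree v)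

lemma minDegree_sq_le_degree_mul_degree (u v : V) :
    G.minDegree ^ 2 ≤ G.degree u * G.degree v :=
  sq G.minDegree ▸ Nat.mul_le_mul (G.minDegree_le_degree u) (G.minDegree_le_degree v)

lemma forall_adj_degree_eq_iff (hpos : ∀ v, 0 < G.degree v) (k : ℕ) :
    (∀ u v, G.Adj u v → G.degree u = k ∧ G.degree v = k) ↔ ∀ v, G.degree v = k := by
  refine ⟨fun h v => ?_, fun h u v _ => ⟨h u, h v⟩⟩
  obtain ⟨w, hvw⟩ := G.degree_pos_iff_exists_adj v |>.1 (hpos v)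
  exact (h v w hvw).1

lemma forall_adj_degree_mul_degree_eq_maxDegree_sq_iff [Nonempty V]
    (hpos : ∀ v, 0 < G.degree v) :
    (∀ u v, G.Adj u v → G.degree u * G.degree v = G.maxDegree ^ 2) ↔
      ∃ k, ∀ v, G.degree v = k := by
  have hmax : 0 < G.maxDegree := (hpos _).trans_le (G.degree_le_maxDegree (Classical.arbitrary V))
  have hmul (u v : V) : G.degree u * G.degree v = G.maxDegree ^ 2 ↔
      G.degree u = G.maxDegree ∧ G.degree v = G.maxDegree := by
    rw [sq]
    exact mul_eq_mul_iff_eq_and_eq_of_pos' (G.degree_le_maxDegree u) (G.degree_le_maxDegree v)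
      hmax (hpos v)
  simp only [hmul, forall_adj_degree_eq_iff hpos]
  exact ⟨fun h => ⟨_, h⟩,
    fun ⟨k, hk⟩ v => (hk v).trans (IsRegularOfDegree.maxDegree_eq G hk).symm⟩

lemma forall_adj_degree_mul_degree_eq_minDegree_sq_iff [Nonempty V]
    (hpos : ∀ v, 0 < G.degree v) :
    (∀ u v, G.Adj u v → G.degree u * G.degree v = G.minDegree ^ 2) ↔
      ∃ k, ∀ v, G.degree v = k := by
  have hmin : 0 < G.minDegree := G.exists_minimal_degree_vertex.elim fun v hv => hv ▸ hpos v
  have hmul (u v : V) : G.degree u * G.degree v = G.minDegree ^ 2 ↔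
      G.degree u = G.minDegree ∧ G.degree v = G.minDegree := by
    rw [sq, eq_comm, mul_eq_mul_iff_eq_and_eq_of_pos (G.minDegree_le_degree u)
      (G.minDegree_le_degree v) hmin (hpos v), eq_comm, @eq_comm _ G.minDegree]
  simp only [hmul, forall_adj_degree_eq_iff hpos]
  exact ⟨fun h => ⟨_, h⟩,
    fun ⟨k, hk⟩ v => (hk v).trans (IsRegularOfDegree.minDegree_eq G hk).symm⟩

variable [DecidableEq V]

theorem rpow_neg_two_mul_mul_ISD_neg_le_ISD (ha : 0 < a) (hc : 0 < c)
    (h : ∀ u v, G.Adj u v → G.degree u * G.degree v ≤ c ^ 2) :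
    (c : ℝ) ^ (-(2 * a)) * ISD G (-a) ≤ ISD G a := by
  rw [ISD_eq_sum_isdEdgeTerm, ISD_eq_sum_isdEdgeTerm, mul_sum]
  refine sum_le_sum <| (forall_mem_edgeFinset_iff G).2 fun u v huv => ?_
  exact (rpow_neg_two_mul_mul_isdEdgeTerm_neg_le_iff huv ha hc).2 (h u v huv)

theorem ISD_le_rpow_neg_two_mul_mul_ISD_neg (ha : 0 < a) (hc : 0 < c)
    (h : ∀ u v, G.Adj u v → c ^ 2 ≤ G.degree u * G.degree v) :
    ISD G a ≤ (c : ℝ) ^ (-(2 * a)) * ISD G (-a) := by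
  rw [ISD_eq_sum_isdEdgeTerm, ISD_eq_sum_isdEdgeTerm, mul_sum]
  refine sum_le_sum <| (forall_mem_edgeFinset_iff G).2 fun u v huv => ?_
  exact (isdEdgeTerm_le_rpow_neg_two_mul_mul_iff huv ha hc).2 (h u v huv)

theorem rpow_neg_two_mul_mul_ISD_neg_eq_ISD_iff (ha : 0 < a) (hc : 0 < c)
    (h : ∀ u v, G.Adj u v → G.degree u * G.degree v ≤ c ^ 2) :
    (c : ℝ) ^ (-(2 * a)) * ISD G (-a) = ISD G a ↔
      ∀ u v, G.Adj u v → G.degree u * G.degree v = c ^ 2 := by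
  have hle : ∀ e ∈ G.edgeFinset, (c : ℝ) ^ (-(2 * a)) * G.isdEdgeTerm (-a) e ≤
      G.isdEdgeTerm a e := (forall_mem_edgeFinset_iff G).2 fun u v huv =>
    (rpow_neg_two_mul_mul_isdEdgeTerm_neg_le_iff huv ha hc).2 (h u v huv)
  rw [ISD_eq_sum_isdEdgeTerm, ISD_eq_sum_isdEdgeTerm, mul_sum, sum_eq_sum_iff_of_le hle,
    forall_mem_edgeFinset_iff]
  exact forall₂_congr fun u v =>
    forall_congr' fun huv => rpow_neg_two_mul_mul_isdEdgeTerm_neg_eq_iff huv ha.ne' hc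

theorem ISD_eq_rpow_neg_two_mul_mul_ISD_neg_iff (ha : 0 < a) (hc : 0 < c)
    (h : ∀ u v, G.Adj u v → c ^ 2 ≤ G.degree u * G.degree v) :
    ISD G a = (c : ℝ) ^ (-(2 * a)) * ISD G (-a) ↔
      ∀ u v, G.Adj u v → G.degree u * G.degree v = c ^ 2 := by
  have hle : ∀ e ∈ G.edgeFinset, G.isdEdgeTerm a e ≤
      (c : ℝ) ^ (-(2 * a)) * G.isdEdgeTerm (-a) e :=
    (forall_mem_edgeFinset_iff G).2 fun u v huv =>
      (isdEdgeTerm_le_rpow_neg_two_mul_mul_iff huv ha hc).2 (h u v huv)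
  rw [ISD_eq_sum_isdEdgeTerm, ISD_eq_sum_isdEdgeTerm, mul_sum, sum_eq_sum_iff_of_le hle,
    forall_mem_edgeFinset_iff]
  exact forall₂_congr fun u v => forall_congr' fun huv =>
    eq_comm.trans (rpow_neg_two_mul_mul_isdEdgeTerm_neg_eq_iff huv ha.ne' hc)

end SimpleGraph

open SimpleGraph

theorem stmt_4 {V : Type*} [Fintype V] [DecidableEq V] [Nonempty V] (G : SimpleGraph V)
    [DecidableRel G.Adj] (hiso : ∀ v : V, 0 < G.degree v) (a : ℝ) (ha : 0 < a) :
    (((G.maxDegree : ℝ) ^ (-(2 * a)) * ISD G (-a) ≤ ISD G a ∧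
      ISD G a ≤ (G.minDegree : ℝ) ^ (-(2 * a)) * ISD G (-a)) ∧
    (ISD G a = (G.maxDegree : ℝ) ^ (-(2 * a)) * ISD G (-a) ↔ ∃ k, ∀ v : V, G.degree v = k) ∧
    (ISD G a = (G.minDegree : ℝ) ^ (-(2 * a)) * ISD G (-a) ↔ ∃ k, ∀ v : V, G.degree v = k)) := by
  have hmax : 0 < G.maxDegree :=
    (hiso _).trans_le (G.degree_le_maxDegree (Classical.arbitrary V))
  have hmin : 0 < G.minDegree := G.exists_minimal_degree_vertex.elim fun v hv => hv ▸ hiso v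
  have hle := G.degree_mul_degree_le_maxDegree_sq
  have hge := G.minDegree_sq_le_degree_mul_degree
  refine ⟨⟨rpow_neg_two_mul_mul_ISD_neg_le_ISD ha hmax fun u v _ => hle u v,
    ISD_le_rpow_neg_two_mul_mul_ISD_neg ha hmin fun u v _ => hge u v⟩, ?_, ?_⟩
  · rw [eq_comm, rpow_neg_two_mul_mul_ISD_neg_eq_ISD_iff ha hmax fun u v _ => hle u v,
      forall_adj_degree_mul_degree_eq_maxDegree_sq_iff hiso]
  · rw [ISD_eq_rpow_neg_two_mul_mul_ISD_neg_iff ha hmin fun u v _ => hge u v,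
      forall_adj_degree_mul_degree_eq_minDegree_sq_iff hiso]
end

section
/- Let G be a finite simple graph without isolated vertices, with minimum degree δ and maximum degree Δ, and let a < 0 be a real number. Then δ^{-2a}·ISD_{-a}(G) ≤ ISD_a(G) ≤ Δ^{-2a}·ISD_{-a}(G), and equality holds in either bound if and only if G is regular. -/
open Finset Real

/-!
Since `1 / (x ^ a + y ^ a) = (x * y) ^ (-a) / (x ^ (-a) + y ^ (-a))`, each edge `uv` contributes
to `ISD_a` its contribution to `ISD_{-a}` weighted by `(d_u d_v) ^ (-a)`. For `a < 0` this weight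
lies between `δ ^ (-2a)` and `Δ ^ (-2a)`, with equality exactly when both endpoints have degree
`δ` (resp. `Δ`). Summing over the edges gives the bounds, and since every vertex lies on an edge,
equality forces every degree to be `δ` (resp. `Δ`).
-/

lemma rpow_neg_two_mul {x : ℝ} (hx : 0 ≤ x) (a : ℝ) : x ^ (-(2 * a)) = (x * x) ^ (-a) := by
  rw [show -(2 * a) = 2 * -a by ring, rpow_mul hx, rpow_two, sq]

lemma one_div_rpow_add_rpow_eq_mul {x y : ℝ} (hx : 0 < x) (hy : 0 < y) (a : ℝ) :
    1 / (x ^ a + y ^ a) = (x * y) ^ (-a) * (1 / (x ^ (-a) + y ^ (-a))) := by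
  rw [mul_rpow hx.le hy.le, rpow_neg hx.le, rpow_neg hy.le]
  have := rpow_pos_of_pos hx a
  have := rpow_pos_of_pos hy a
  field_simp
  ring

theorem Finset.sum_mul_eq_sum_mul_iff_of_le {ι R : Type*} [Field R] [LinearOrder R]
    [IsStrictOrderedRing R] {s : Finset ι} {f g w : ι → R} (hw : ∀ i ∈ s, 0 < w i)
    (hfg : ∀ i ∈ s, f i ≤ g i) :
    ∑ i ∈ s, f i * w i = ∑ i ∈ s, g i * w i ↔ ∀ i ∈ s, f i = g i := by
  rw [Finset.sum_eq_sum_iff_of_le fun i hi => mul_le_mul_of_nonneg_right (hfg i hi) (hw i hi).le]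
  exact forall₂_congr fun i hi => mul_left_inj' (hw i hi).ne'

namespace SimpleGraph

variable {V : Type*} [Fintype V] (G : SimpleGraph V) [DecidableRel G.Adj]

lemma forall_mem_edgeFinset_forall_mem_iff (hiso : ∀ v : V, 0 < G.degree v) {p : V → Prop} :
    (∀ e ∈ G.edgeFinset, ∀ w ∈ e, p w) ↔ ∀ v, p v := by
  refine ⟨fun h v => ?_, fun h _ _ w _ => h w⟩
  obtain ⟨w, hw⟩ := Finset.card_pos.mp (hiso v)
  exact h s(v, w) (mem_edgeFinset.mpr ((mem_neighborFinset G v w).mp hw)) v (Sym2.mem_mk_left v w)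

lemma minDegree_pos [Nonempty V] (hiso : ∀ v : V, 0 < G.degree v) : 0 < G.minDegree := by
  obtain ⟨v, hv⟩ := G.exists_minimal_degree_vertex
  exact hv ▸ hiso v

def edgeDegProd : Sym2 V → ℝ :=
  Sym2.lift ⟨fun u v => (G.degree u : ℝ) * G.degree v, fun _ _ => mul_comm _ _⟩

lemma minDegree_mul_self_le_edgeDegProd [Nonempty V] (hiso : ∀ v : V, 0 < G.degree v)
    (e : Sym2 V) :
    (G.minDegree : ℝ) * G.minDegree ≤ G.edgeDegProd e ∧
      (G.edgeDegProd e = G.minDegree * G.minDegree ↔ ∀ w ∈ e, G.degree w = G.minDegree) := by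
  induction e using Sym2.ind with
  | _ u v =>
    have hu : (G.minDegree : ℝ) ≤ G.degree u := by exact_mod_cast G.minDegree_le_degree u
    have hv : (G.minDegree : ℝ) ≤ G.degree v := by exact_mod_cast G.minDegree_le_degree v
    have hδ : (0 : ℝ) < G.minDegree := by exact_mod_cast G.minDegree_pos hiso
    refine ⟨mul_le_mul hu hv hδ.le (hδ.trans_le hu).le, ?_⟩
    rw [edgeDegProd, Sym2.lift_mk, eq_comm, mul_eq_mul_iff_eq_and_eq_of_pos hu hv hδ (hδ.trans_le hv)]
    simp only [Sym2.mem_iff, forall_eq_or_imp, forall_eq, Nat.cast_inj, @eq_comm ℕ G.minDegree]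

lemma edgeDegProd_le_maxDegree_mul_self (hiso : ∀ v : V, 0 < G.degree v) (e : Sym2 V) :
    G.edgeDegProd e ≤ G.maxDegree * G.maxDegree ∧
      (G.edgeDegProd e = G.maxDegree * G.maxDegree ↔ ∀ w ∈ e, G.degree w = G.maxDegree) := by
  induction e using Sym2.ind with
  | _ u v =>
    have hu : (G.degree u : ℝ) ≤ G.maxDegree := by exact_mod_cast G.degree_le_maxDegree u
    have hv : (G.degree v : ℝ) ≤ G.maxDegree := by exact_mod_cast G.degree_le_maxDegree v
    have hu0 : (0 : ℝ) < G.degree u := by exact_mod_cast hiso u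
    have hv0 : (0 : ℝ) < G.degree v := by exact_mod_cast hiso v
    refine ⟨mul_le_mul hu hv hv0.le (hu0.trans_le hu).le, ?_⟩
    rw [edgeDegProd, Sym2.lift_mk, mul_eq_mul_iff_eq_and_eq_of_pos hu hv hu0 (hv0.trans_le hv)]
    simp only [Sym2.mem_iff, forall_eq_or_imp, forall_eq, Nat.cast_inj]

lemma forall_edgeDegProd_eq_minDegree_mul_self_iff [Nonempty V]
    (hiso : ∀ v : V, 0 < G.degree v) :
    (∀ e ∈ G.edgeFinset, G.edgeDegProd e = G.minDegree * G.minDegree) ↔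
      ∃ k, ∀ v : V, G.degree v = k := by
  calc (∀ e ∈ G.edgeFinset, G.edgeDegProd e = G.minDegree * G.minDegree)
      ↔ ∀ e ∈ G.edgeFinset, ∀ w ∈ e, G.degree w = G.minDegree :=
        forall₂_congr fun e _ => (G.minDegree_mul_self_le_edgeDegProd hiso e).2
    _ ↔ ∀ v, G.degree v = G.minDegree := G.forall_mem_edgeFinset_forall_mem_iff hiso
    _ ↔ ∃ k, ∀ v : V, G.degree v = k := by
      refine ⟨fun h => ⟨_, h⟩, fun ⟨k, hk⟩ => ?_⟩
      rwa [IsRegularOfDegree.minDegree_eq (G := G) hk]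

lemma forall_edgeDegProd_eq_maxDegree_mul_self_iff [Nonempty V]
    (hiso : ∀ v : V, 0 < G.degree v) :
    (∀ e ∈ G.edgeFinset, G.edgeDegProd e = G.maxDegree * G.maxDegree) ↔
      ∃ k, ∀ v : V, G.degree v = k := by
  calc (∀ e ∈ G.edgeFinset, G.edgeDegProd e = G.maxDegree * G.maxDegree)
      ↔ ∀ e ∈ G.edgeFinset, ∀ w ∈ e, G.degree w = G.maxDegree :=
        forall₂_congr fun e _ => (G.edgeDegProd_le_maxDegree_mul_self hiso e).2
    _ ↔ ∀ v, G.degree v = G.maxDegree := G.forall_mem_edgeFinset_forall_mem_iff hiso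
    _ ↔ ∃ k, ∀ v : V, G.degree v = k := by
      refine ⟨fun h => ⟨_, h⟩, fun ⟨k, hk⟩ => ?_⟩
      rwa [IsRegularOfDegree.maxDegree_eq (G := G) hk]

noncomputable def isdTerm (a : ℝ) : Sym2 V → ℝ :=
  Sym2.lift ⟨fun u v => 1 / ((G.degree u : ℝ) ^ a + (G.degree v : ℝ) ^ a),
    fun u v => by simp [add_comm]⟩

lemma isdTerm_pos (hiso : ∀ v : V, 0 < G.degree v) (a : ℝ) (e : Sym2 V) : 0 < G.isdTerm a e := by
  induction e using Sym2.ind with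
  | _ u v =>
    have hu : (0 : ℝ) < G.degree u := by exact_mod_cast hiso u
    have hv : (0 : ℝ) < G.degree v := by exact_mod_cast hiso v
    rw [isdTerm, Sym2.lift_mk]
    positivity

lemma isdTerm_eq_edgeDegProd_rpow_mul (hiso : ∀ v : V, 0 < G.degree v) (a : ℝ) (e : Sym2 V) :
    G.isdTerm a e = G.edgeDegProd e ^ (-a) * G.isdTerm (-a) e := by
  induction e using Sym2.ind with
  | _ u v => exact one_div_rpow_add_rpow_eq_mul (by exact_mod_cast hiso u) (by exact_mod_cast hiso v) a

variable [DecidableEq V]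

lemma ISD_eq_sum_isdTerm (a : ℝ) : ISD G a = ∑ e ∈ G.edgeFinset, G.isdTerm a e := rfl

lemma ISD_eq_sum_edgeDegProd_rpow_mul (hiso : ∀ v : V, 0 < G.degree v) (a : ℝ) :
    ISD G a = ∑ e ∈ G.edgeFinset, G.edgeDegProd e ^ (-a) * G.isdTerm (-a) e := by
  rw [ISD_eq_sum_isdTerm]
  exact Finset.sum_congr rfl fun e _ => G.isdTerm_eq_edgeDegProd_rpow_mul hiso a e

lemma rpow_mul_ISD_neg_le_ISD (hiso : ∀ v : V, 0 < G.degree v) {a c : ℝ} (ha : a < 0)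
    (hc : 0 ≤ c) (h : ∀ e ∈ G.edgeFinset, c ≤ G.edgeDegProd e) :
    c ^ (-a) * ISD G (-a) ≤ ISD G a ∧
      (ISD G a = c ^ (-a) * ISD G (-a) ↔ ∀ e ∈ G.edgeFinset, G.edgeDegProd e = c) := by
  have hle : ∀ e ∈ G.edgeFinset, c ^ (-a) ≤ G.edgeDegProd e ^ (-a) :=
    fun e he => rpow_le_rpow hc (h e he) (by linarith)
  rw [G.ISD_eq_sum_edgeDegProd_rpow_mul hiso a, ISD_eq_sum_isdTerm, Finset.mul_sum]
  refine ⟨Finset.sum_le_sum fun e he =>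
    mul_le_mul_of_nonneg_right (hle e he) (G.isdTerm_pos hiso _ e).le, ?_⟩
  rw [eq_comm, Finset.sum_mul_eq_sum_mul_iff_of_le (fun e _ => G.isdTerm_pos hiso _ e) hle]
  exact forall₂_congr fun e he =>
    (rpow_left_inj hc (hc.trans (h e he)) (by linarith)).trans eq_comm

lemma ISD_le_rpow_mul_ISD_neg (hiso : ∀ v : V, 0 < G.degree v) {a c : ℝ} (ha : a < 0)
    (h : ∀ e ∈ G.edgeFinset, G.edgeDegProd e ≤ c) :
    ISD G a ≤ c ^ (-a) * ISD G (-a) ∧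
      (ISD G a = c ^ (-a) * ISD G (-a) ↔ ∀ e ∈ G.edgeFinset, G.edgeDegProd e = c) := by
  have hP : ∀ e, 0 ≤ G.edgeDegProd e := fun e => by
    induction e using Sym2.ind with
    | _ u v => exact mul_nonneg (Nat.cast_nonneg _) (Nat.cast_nonneg _)
  have hle : ∀ e ∈ G.edgeFinset, G.edgeDegProd e ^ (-a) ≤ c ^ (-a) :=
    fun e he => rpow_le_rpow (hP e) (h e he) (by linarith)
  rw [G.ISD_eq_sum_edgeDegProd_rpow_mul hiso a, ISD_eq_sum_isdTerm, Finset.mul_sum]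
  refine ⟨Finset.sum_le_sum fun e he =>
    mul_le_mul_of_nonneg_right (hle e he) (G.isdTerm_pos hiso _ e).le, ?_⟩
  rw [Finset.sum_mul_eq_sum_mul_iff_of_le (fun e _ => G.isdTerm_pos hiso _ e) hle]
  exact forall₂_congr fun e he => rpow_left_inj (hP e) ((hP e).trans (h e he)) (by linarith)

end SimpleGraph

theorem stmt_5 {V : Type*} [Fintype V] [DecidableEq V] [Nonempty V] (G : SimpleGraph V)
    [DecidableRel G.Adj] (hiso : ∀ v : V, 0 < G.degree v) (a : ℝ) (ha : a < 0) :
    (((G.minDegree : ℝ) ^ (-(2 * a)) * ISD G (-a) ≤ ISD G a ∧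
      ISD G a ≤ (G.maxDegree : ℝ) ^ (-(2 * a)) * ISD G (-a)) ∧
    (ISD G a = (G.minDegree : ℝ) ^ (-(2 * a)) * ISD G (-a) ↔ ∃ k, ∀ v : V, G.degree v = k) ∧
    (ISD G a = (G.maxDegree : ℝ) ^ (-(2 * a)) * ISD G (-a) ↔ ∃ k, ∀ v : V, G.degree v = k)) := by
  rw [rpow_neg_two_mul (Nat.cast_nonneg _), rpow_neg_two_mul (Nat.cast_nonneg _)]
  obtain ⟨hlow, hlow_eq⟩ := G.rpow_mul_ISD_neg_le_ISD hiso ha (by positivity)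
    fun e _ => (G.minDegree_mul_self_le_edgeDegProd hiso e).1
  obtain ⟨hup, hup_eq⟩ := G.ISD_le_rpow_mul_ISD_neg hiso ha
    fun e _ => (G.edgeDegProd_le_maxDegree_mul_self hiso e).1
  exact ⟨⟨hlow, hup⟩, hlow_eq.trans (G.forall_edgeDegProd_eq_minDegree_mul_self_iff hiso),
    hup_eq.trans (G.forall_edgeDegProd_eq_maxDegree_mul_self_iff hiso)⟩
end

section
/- Let G be a finite simple graph without isolated vertices and let a > 1 be a real number. Then χ_{-a}(G) < ISD_a(G) ≤ 2^{a-1}·χ_{-a}(G), and equality holds in the upper bound if and only if each connected component of G is regular. -/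
/-!
Edge by edge, with `x = d_u` and `y = d_v`: strict superadditivity of `t ↦ t ^ a` gives
`(x + y) ^ (-a) < 1 / (x ^ a + y ^ a)`, and convexity of `t ↦ t ^ a` at the midpoint of `x` and `y`
gives `(x + y) ^ a ≤ 2 ^ (a - 1) (x ^ a + y ^ a)`, i.e. `1 / (x ^ a + y ^ a) ≤ 2 ^ (a - 1) (x + y) ^ (-a)`,
with equality exactly when `x = y` by strict convexity. Summing over the edges, equality in the upper
bound holds iff adjacent vertices have equal degrees, i.e. iff degree is constant on components.
-/

open Finset Real

/-- The general sum-connectivity index `χ_α(G) = Σ_{uv ∈ E(G)} (d_u + d_v)^α`. -/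
noncomputable def sumConn {V : Type*} [Fintype V] [DecidableEq V] (G : SimpleGraph V)
    [DecidableRel G.Adj] (α : ℝ) : ℝ :=
  ∑ e ∈ G.edgeFinset,
    Sym2.lift ⟨fun u v => ((G.degree u : ℝ) + (G.degree v : ℝ)) ^ α,
      fun u v => by simp [add_comm]⟩ e

namespace Real

variable {x y a : ℝ}

theorem rpow_add_rpow_lt_add_rpow (hx : 0 < x) (hy : 0 < y) (ha : 1 < a) :
    x ^ a + y ^ a < (x + y) ^ a := by
  have hxy : 0 < x + y := hx.trans (lt_add_of_pos_right x hy)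
  have hx' : x ^ (a - 1) < (x + y) ^ (a - 1) :=
    rpow_lt_rpow hx.le (lt_add_of_pos_right x hy) (by linarith)
  have hy' : y ^ (a - 1) < (x + y) ^ (a - 1) :=
    rpow_lt_rpow hy.le (lt_add_of_pos_left y hx) (by linarith)
  calc x ^ a + y ^ a = x * x ^ (a - 1) + y * y ^ (a - 1) := by
        rw [rpow_sub_one hx.ne', rpow_sub_one hy.ne', mul_div_cancel₀ _ hx.ne',
          mul_div_cancel₀ _ hy.ne']
    _ < x * (x + y) ^ (a - 1) + y * (x + y) ^ (a - 1) := by gcongr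
    _ = (x + y) ^ a := by rw [← add_mul, rpow_sub_one hxy.ne', mul_div_cancel₀ _ hxy.ne']

theorem add_rpow_le_two_rpow_mul (hx : 0 ≤ x) (hy : 0 ≤ y) (ha : 1 ≤ a) :
    (x + y) ^ a ≤ 2 ^ (a - 1) * (x ^ a + y ^ a) := by
  lift x to NNReal using hx
  lift y to NNReal using hy
  exact_mod_cast NNReal.rpow_add_le_mul_rpow_add_rpow x y ha

theorem add_rpow_lt_two_rpow_mul (hx : 0 ≤ x) (hy : 0 ≤ y) (hxy : x ≠ y) (ha : 1 < a) :
    (x + y) ^ a < 2 ^ (a - 1) * (x ^ a + y ^ a) := by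
  have hmid := (strictConvexOn_rpow ha).2 hx hy hxy (by norm_num : (0 : ℝ) < 1 / 2)
    (by norm_num : (0 : ℝ) < 1 / 2) (by norm_num)
  simp only [smul_eq_mul] at hmid
  calc (x + y) ^ a = 2 ^ (a - 1) * (2 * (1 / 2 * x + 1 / 2 * y) ^ a) := by
        rw [← mul_assoc, rpow_sub_one two_ne_zero, div_mul_cancel₀ _ two_ne_zero,
          ← mul_rpow zero_le_two (by positivity)]
        ring_nf
    _ < 2 ^ (a - 1) * (2 * (1 / 2 * x ^ a + 1 / 2 * y ^ a)) := by gcongr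
    _ = 2 ^ (a - 1) * (x ^ a + y ^ a) := by ring

theorem add_rpow_eq_two_rpow_mul_iff (hx : 0 ≤ x) (hy : 0 ≤ y) (ha : 1 < a) :
    (x + y) ^ a = 2 ^ (a - 1) * (x ^ a + y ^ a) ↔ x = y := by
  refine ⟨fun h => by_contra fun hxy => (add_rpow_lt_two_rpow_mul hx hy hxy ha).ne h, ?_⟩
  rintro rfl
  rw [← two_mul, ← two_mul, mul_rpow zero_le_two hx, rpow_sub_one two_ne_zero]
  field_simp

theorem add_rpow_neg_lt_one_div (hx : 0 < x) (hy : 0 < y) (ha : 1 < a) :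
    (x + y) ^ (-a) < 1 / (x ^ a + y ^ a) := by
  rw [rpow_neg (by positivity), ← one_div]
  exact one_div_lt_one_div_of_lt (by positivity) (rpow_add_rpow_lt_add_rpow hx hy ha)

theorem one_div_rpow_add_rpow_le_two_rpow_mul (hx : 0 < x) (hy : 0 < y) (ha : 1 ≤ a) :
    1 / (x ^ a + y ^ a) ≤ 2 ^ (a - 1) * (x + y) ^ (-a) := by
  rw [rpow_neg (by positivity), ← div_eq_mul_inv, div_le_div_iff₀ (by positivity) (by positivity),
    one_mul]
  exact add_rpow_le_two_rpow_mul hx.le hy.le ha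

theorem one_div_rpow_add_rpow_eq_two_rpow_mul_iff (hx : 0 < x) (hy : 0 < y) (ha : 1 < a) :
    1 / (x ^ a + y ^ a) = 2 ^ (a - 1) * (x + y) ^ (-a) ↔ x = y := by
  rw [rpow_neg (by positivity), ← div_eq_mul_inv, div_eq_div_iff (by positivity) (by positivity),
    one_mul]
  exact add_rpow_eq_two_rpow_mul_iff hx.le hy.le ha

end Real

namespace SimpleGraph

variable {V : Type*} (G : SimpleGraph V)

theorem forall_adj_eq_iff_forall_reachable_eq {β : Type*} (f : V → β) :
    (∀ u v, G.Adj u v → f u = f v) ↔ ∀ u v, G.Reachable u v → f u = f v := by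
  refine ⟨fun h u v huv => ?_, fun h u v huv => h u v huv.reachable⟩
  rw [reachable_iff_reflTransGen] at huv
  induction huv with
  | refl => rfl
  | tail _ hadj ih => exact ih.trans (h _ _ hadj)

theorem forall_mem_edgeFinset [Fintype G.edgeSet] {p : Sym2 V → Prop} :
    (∀ e ∈ G.edgeFinset, p e) ↔ ∀ u v, G.Adj u v → p s(u, v) := by
  simp [Sym2.forall]

end SimpleGraph

section Indices

variable {V : Type*} [Fintype V] [DecidableEq V] (G : SimpleGraph V) [DecidableRel G.Adj] {a : ℝ}

theorem sumConn_neg_lt_ISD [Nonempty V] (hiso : ∀ v, 0 < G.degree v) (ha : 1 < a) :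
    sumConn G (-a) < ISD G a := by
  have hE : G.edgeFinset.Nonempty := by
    obtain ⟨w, hw⟩ := (G.degree_pos_iff_exists_adj _).1 (hiso (Classical.arbitrary V))
    exact ⟨s(_, w), G.mem_edgeFinset.2 hw⟩
  refine sum_lt_sum_of_nonempty hE (G.forall_mem_edgeFinset.2 fun u v huv => ?_)
  exact add_rpow_neg_lt_one_div (mod_cast huv.degree_pos_left) (mod_cast huv.degree_pos_right) ha

theorem ISD_le_two_rpow_mul_sumConn (ha : 1 ≤ a) :
    ISD G a ≤ 2 ^ (a - 1) * sumConn G (-a) := by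
  rw [ISD, sumConn, mul_sum]
  refine sum_le_sum (G.forall_mem_edgeFinset.2 fun u v huv => ?_)
  exact one_div_rpow_add_rpow_le_two_rpow_mul (mod_cast huv.degree_pos_left)
    (mod_cast huv.degree_pos_right) ha

theorem ISD_eq_two_rpow_mul_sumConn_iff (ha : 1 < a) :
    ISD G a = 2 ^ (a - 1) * sumConn G (-a) ↔ ∀ u v, G.Adj u v → G.degree u = G.degree v := by
  rw [ISD, sumConn, mul_sum, sum_eq_sum_iff_of_le, G.forall_mem_edgeFinset]
  · refine forall₂_congr fun u v => forall_congr' fun huv => ?_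
    exact (one_div_rpow_add_rpow_eq_two_rpow_mul_iff (mod_cast huv.degree_pos_left)
      (mod_cast huv.degree_pos_right) ha).trans Nat.cast_inj
  · exact G.forall_mem_edgeFinset.2 fun u v huv => one_div_rpow_add_rpow_le_two_rpow_mul
      (mod_cast huv.degree_pos_left) (mod_cast huv.degree_pos_right) ha.le

end Indices

theorem stmt_6 {V : Type*} [Fintype V] [DecidableEq V] [Nonempty V] (G : SimpleGraph V)
    [DecidableRel G.Adj] (hiso : ∀ v : V, 0 < G.degree v) (a : ℝ) (ha : 1 < a) :
    ((sumConn G (-a) < ISD G a ∧ ISD G a ≤ 2 ^ (a - 1) * sumConn G (-a)) ∧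
    (ISD G a = 2 ^ (a - 1) * sumConn G (-a) ↔ ∀ u v : V, G.Reachable u v → G.degree u = G.degree v)) :=
  ⟨⟨sumConn_neg_lt_ISD G hiso ha, ISD_le_two_rpow_mul_sumConn G ha.le⟩,
    (ISD_eq_two_rpow_mul_sumConn_iff G ha).trans (G.forall_adj_eq_iff_forall_reachable_eq _)⟩
end

section
/- Let G be a finite simple graph without isolated vertices and let a be a real number with 0 < a < 1. Then 2^{a-1}·χ_{-a}(G) ≤ ISD_a(G) < χ_{-a}(G), and equality holds in the lower bound if and only if each connected component of G is regular. -/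
open Finset Real

lemma lemA {a x y : ℝ} (ha0 : 0 < a) (ha1 : a < 1) (hx : 0 < x) (hy : 0 < y) :
    (x + y) ^ a < x ^ a + y ^ a := by
  have hxy : 0 < x + y := by linarith
  have key : ∀ z : ℝ, 0 < z → z < x + y → z * (x + y) ^ (a - 1) < z ^ a := by
    intro z hz hzlt
    calc z * (x + y) ^ (a - 1) < z * z ^ (a - 1) := by
          have := Real.rpow_lt_rpow_of_neg hz hzlt (by linarith : a - 1 < 0)
          exact mul_lt_mul_of_pos_left this hz
      _ = z ^ a := by
          rw [← Real.rpow_one_add' (le_of_lt hz) (by intro h; linarith)]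
          ring_nf
  have h3 : (x + y) ^ a = x * (x + y) ^ (a - 1) + y * (x + y) ^ (a - 1) := by
    rw [← add_mul, ← Real.rpow_one_add' (le_of_lt hxy) (by intro h; linarith)]
    ring_nf
  rw [h3]
  exact add_lt_add (key x hx (by linarith)) (key y hy (by linarith))

lemma lemB {a x y : ℝ} (ha0 : 0 < a) (ha1 : a < 1) (hx : 0 < x) (hy : 0 < y) :
    x ^ a + y ^ a ≤ 2 ^ (1 - a) * (x + y) ^ a ∧
      (x ^ a + y ^ a = 2 ^ (1 - a) * (x + y) ^ a ↔ x = y) := by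
  have h2 : (2:ℝ) ^ (1 - a) * (x + y) ^ a = 2 * ((x + y) / 2) ^ a := by
    rw [Real.div_rpow (by linarith) (by norm_num), Real.rpow_sub (by norm_num), Real.rpow_one]
    field_simp
  have hxx : (x + x) / 2 = x := by ring
  rcases eq_or_ne x y with rfl | hne
  · constructor
    · rw [h2, hxx]; linarith
    · rw [h2, hxx]
      exact ⟨fun _ => rfl, fun _ => by ring⟩
  · have hs := (Real.strictConcaveOn_rpow ha0 ha1).2 (Set.mem_Ici.2 hx.le) (Set.mem_Ici.2 hy.le)
      hne (by norm_num : (0:ℝ) < 1/2) (by norm_num : (0:ℝ) < 1/2) (by norm_num)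
    simp only [smul_eq_mul] at hs
    have hlt : x ^ a + y ^ a < 2 ^ (1 - a) * (x + y) ^ a := by
      rw [h2, show (x + y)/2 = 1/2*x + 1/2*y by ring]; linarith
    exact ⟨hlt.le, by constructor <;> intro h <;> [linarith; exact absurd h hne]⟩

lemma edge_ineq {a x y : ℝ} (ha0 : 0 < a) (ha1 : a < 1) (hx : 0 < x) (hy : 0 < y) :
    (2:ℝ) ^ (a-1) * (x+y) ^ (-a) ≤ 1/(x^a+y^a) ∧
    (1/(x^a+y^a) = 2 ^ (a-1) * (x+y) ^ (-a) ↔ x = y) ∧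
    1/(x^a+y^a) < (x+y) ^ (-a) := by
  have hxy : (0:ℝ) < x + y := by linarith
  have hP : (0:ℝ) < x ^ a + y ^ a := by positivity
  have hQ : (0:ℝ) < (x + y) ^ a := Real.rpow_pos_of_pos hxy a
  have h2 : (2:ℝ) ^ (a-1) * (x+y) ^ (-a) = (2 ^ (1-a) * (x+y) ^ a)⁻¹ := by
    rw [Real.rpow_neg hxy.le, show a - 1 = -(1-a) by ring,
      Real.rpow_neg (by norm_num : (0:ℝ) ≤ 2), mul_inv]
  have hB := lemB ha0 ha1 hx hy
  have h2Q : (0:ℝ) < 2 ^ (1-a) * (x+y) ^ a := by positivity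
  refine ⟨?_, ?_, ?_⟩
  · rw [h2, one_div]
    exact inv_anti₀ hP hB.1
  · rw [h2, one_div, inv_inj]
    exact hB.2
  · rw [Real.rpow_neg hxy.le, one_div]
    exact inv_strictAnti₀ hQ (lemA ha0 ha1 hx hy)

theorem stmt_7 {V : Type*} [Fintype V] [DecidableEq V] [Nonempty V] (G : SimpleGraph V)
    [DecidableRel G.Adj] (hiso : ∀ v : V, 0 < G.degree v) (a : ℝ) (ha0 : 0 < a) (ha1 : a < 1) :
    ((2 ^ (a - 1) * sumConn G (-a) ≤ ISD G a ∧ ISD G a < sumConn G (-a)) ∧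
    (ISD G a = 2 ^ (a - 1) * sumConn G (-a) ↔ ∀ u v : V, G.Reachable u v → G.degree u = G.degree v)) := by
  classical
  have hposR : ∀ v : V, (0:ℝ) < (G.degree v : ℝ) := fun v => by exact_mod_cast hiso v
  have hne : G.edgeFinset.Nonempty := by
    obtain ⟨v⟩ := ‹Nonempty V›
    have hd := hiso v
    rw [← SimpleGraph.card_neighborFinset_eq_degree] at hd
    obtain ⟨w, hw⟩ := Finset.card_pos.mp hd
    exact ⟨s(v, w), SimpleGraph.mem_edgeFinset.2 ((SimpleGraph.mem_neighborFinset G v w).mp hw)⟩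
  rw [ISD, sumConn, Finset.mul_sum]
  have hle : ∀ e ∈ G.edgeFinset,
      (2:ℝ) ^ (a - 1) * Sym2.lift ⟨fun u v => ((G.degree u : ℝ) + (G.degree v : ℝ)) ^ (-a),
        fun u v => by simp [add_comm]⟩ e
      ≤ Sym2.lift ⟨fun u v => 1 / ((G.degree u : ℝ) ^ a + (G.degree v : ℝ) ^ a),
        fun u v => by simp [add_comm]⟩ e := by
    intro e he
    induction e using Sym2.ind with
    | _ u v =>
      simp only [Sym2.lift_mk]
      exact (edge_ineq ha0 ha1 (hposR u) (hposR v)).1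
  refine ⟨⟨Finset.sum_le_sum hle, ?_⟩, ?_⟩
  · apply Finset.sum_lt_sum_of_nonempty hne
    intro e he
    induction e using Sym2.ind with
    | _ u v =>
      simp only [Sym2.lift_mk]
      exact (edge_ineq ha0 ha1 (hposR u) (hposR v)).2.2
  · rw [eq_comm, Finset.sum_eq_sum_iff_of_le hle]
    constructor
    · intro h u v huv
      have hadj : ∀ x y : V, G.Adj x y → G.degree x = G.degree y := by
        intro x y hxy
        have hm : s(x, y) ∈ G.edgeFinset := SimpleGraph.mem_edgeFinset.2 hxy
        have := (h _ hm).symm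
        simp only [Sym2.lift_mk] at this
        have := ((edge_ineq ha0 ha1 (hposR x) (hposR y)).2.1).mp this
        exact_mod_cast this
      obtain ⟨p⟩ := huv
      induction p with
      | nil => rfl
      | cons hstep _ ih => exact (hadj _ _ hstep).trans ih
    · intro h e he
      induction e using Sym2.ind with
      | _ u v =>
        have hadj : G.Adj u v := SimpleGraph.mem_edgeFinset.mp he
        have hdeg : (G.degree u : ℝ) = (G.degree v : ℝ) := by
          exact_mod_cast h u v hadj.reachable
        simp only [Sym2.lift_mk]
        exact (((edge_ineq ha0 ha1 (hposR u) (hposR v)).2.1).mpr hdeg).symm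
end

section
/- Let G be a finite simple graph without isolated vertices and let a < 0 be a real number. Then ISD_a(G) ≤ 2^{a-1}·χ_{-a}(G), and equality holds if and only if each connected component of G is regular. -/
open Finset Real

lemma half_rpow (a : ℝ) {x y : ℝ} (hx : 0 < x) (hy : 0 < y) :
    2 ^ (1 - a) * (x + y) ^ a = 2 * ((x + y) / 2) ^ a := by
  have hxy : (0:ℝ) < x + y := by linarith
  rw [Real.div_rpow hxy.le (by norm_num), Real.rpow_sub (by norm_num), Real.rpow_one]
  have h2a : (2:ℝ) ^ a ≠ 0 := (Real.rpow_pos_of_pos (by norm_num) a).ne'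
  field_simp

lemma sqrt_rpow_eq (a : ℝ) {x y : ℝ} (hx : 0 < x) (hy : 0 < y) :
    (Real.sqrt (x * y)) ^ a = x ^ (a / 2) * y ^ (a / 2) := by
  rw [Real.sqrt_eq_rpow, ← Real.rpow_mul (mul_pos hx hy).le,
    ← Real.mul_rpow hx.le hy.le]
  ring_nf

lemma key_le (a : ℝ) (ha : a < 0) {x y : ℝ} (hx : 0 < x) (hy : 0 < y) :
    2 ^ (1 - a) * (x + y) ^ a ≤ x ^ a + y ^ a := by
  have hxy : 0 < x + y := by linarith
  have hs : 0 < Real.sqrt (x * y) := Real.sqrt_pos.mpr (mul_pos hx hy)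
  have h1 : Real.sqrt (x * y) ≤ (x + y) / 2 := by
    have : Real.sqrt (x * y) ≤ Real.sqrt (((x + y) / 2) ^ 2) :=
      Real.sqrt_le_sqrt (by nlinarith [sq_nonneg (x - y)])
    rwa [Real.sqrt_sq (by linarith)] at this
  have h2 : ((x + y) / 2) ^ a ≤ (Real.sqrt (x * y)) ^ a :=
    Real.rpow_le_rpow_of_nonpos hs h1 ha.le
  have hx2 : x ^ (a / 2) * x ^ (a / 2) = x ^ a := by
    rw [← Real.rpow_add hx]; ring_nf
  have hy2 : y ^ (a / 2) * y ^ (a / 2) = y ^ a := by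
    rw [← Real.rpow_add hy]; ring_nf
  rw [half_rpow a hx hy]
  rw [sqrt_rpow_eq a hx hy] at h2
  nlinarith [sq_nonneg (x ^ (a / 2) - y ^ (a / 2))]

lemma key_lt (a : ℝ) (ha : a < 0) {x y : ℝ} (hx : 0 < x) (hy : 0 < y) (hne : x ≠ y) :
    2 ^ (1 - a) * (x + y) ^ a < x ^ a + y ^ a := by
  have hxy : 0 < x + y := by linarith
  have hs : 0 < Real.sqrt (x * y) := Real.sqrt_pos.mpr (mul_pos hx hy)
  have h1 : Real.sqrt (x * y) < (x + y) / 2 := by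
    have hne2 : (x - y) ^ 2 > 0 := by
      have : x - y ≠ 0 := sub_ne_zero.mpr hne
      positivity
    have : Real.sqrt (x * y) < Real.sqrt (((x + y) / 2) ^ 2) :=
      Real.sqrt_lt_sqrt (mul_pos hx hy).le (by nlinarith)
    rwa [Real.sqrt_sq (by linarith)] at this
  have h2 : ((x + y) / 2) ^ a < (Real.sqrt (x * y)) ^ a :=
    Real.rpow_lt_rpow_of_neg hs h1 ha
  have hx2 : x ^ (a / 2) * x ^ (a / 2) = x ^ a := by
    rw [← Real.rpow_add hx]; ring_nf
  have hy2 : y ^ (a / 2) * y ^ (a / 2) = y ^ a := by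
    rw [← Real.rpow_add hy]; ring_nf
  rw [half_rpow a hx hy]
  rw [sqrt_rpow_eq a hx hy] at h2
  nlinarith [sq_nonneg (x ^ (a / 2) - y ^ (a / 2))]

lemma term_le (a : ℝ) (ha : a < 0) {x y : ℝ} (hx : 0 < x) (hy : 0 < y) :
    1 / (x ^ a + y ^ a) ≤ 2 ^ (a - 1) * (x + y) ^ (-a) := by
  have hxy : (0:ℝ) < x + y := by linarith
  have hA : 0 < x ^ a + y ^ a := by positivity
  have hB : 0 < (x + y) ^ a := Real.rpow_pos_of_pos hxy a
  have hc : (0:ℝ) < 2 ^ (1 - a) := Real.rpow_pos_of_pos (by norm_num) _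
  have hrw : 2 ^ (a - 1) * (x + y) ^ (-a) = (2 ^ (1 - a) * (x + y) ^ a)⁻¹ := by
    rw [Real.rpow_neg hxy.le, show a - 1 = -(1 - a) by ring,
      Real.rpow_neg (by norm_num : (0:ℝ) ≤ 2), mul_inv]
  rw [hrw, one_div]
  exact inv_anti₀ (by positivity) (key_le a ha hx hy)

lemma term_eq_iff (a : ℝ) (ha : a < 0) {x y : ℝ} (hx : 0 < x) (hy : 0 < y) :
    1 / (x ^ a + y ^ a) = 2 ^ (a - 1) * (x + y) ^ (-a) ↔ x = y := by
  have hxy : (0:ℝ) < x + y := by linarith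
  have hA : 0 < x ^ a + y ^ a := by positivity
  have hrw : 2 ^ (a - 1) * (x + y) ^ (-a) = (2 ^ (1 - a) * (x + y) ^ a)⁻¹ := by
    rw [Real.rpow_neg hxy.le, show a - 1 = -(1 - a) by ring,
      Real.rpow_neg (by norm_num : (0:ℝ) ≤ 2), mul_inv]
  constructor
  · intro h
    by_contra hne
    have hlt := key_lt a ha hx hy hne
    have : (x ^ a + y ^ a)⁻¹ < (2 ^ (1 - a) * (x + y) ^ a)⁻¹ :=
      inv_strictAnti₀ (by positivity) hlt
    rw [hrw, one_div] at h
    linarith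
  · rintro rfl
    rw [hrw]
    have h2x : 2 ^ (1 - a) * (x + x) ^ a = x ^ a + x ^ a := by
      rw [show x + x = 2 * x by ring, Real.mul_rpow (by norm_num) hx.le,
        ← mul_assoc, ← Real.rpow_add (by norm_num : (0:ℝ) < 2)]
      norm_num
      ring
    rw [h2x, one_div]
theorem stmt_8 {V : Type*} [Fintype V] [DecidableEq V] [Nonempty V] (G : SimpleGraph V)
    [DecidableRel G.Adj] (hiso : ∀ v : V, 0 < G.degree v) (a : ℝ) (ha : a < 0) :
    ((ISD G a ≤ 2 ^ (a - 1) * sumConn G (-a)) ∧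
    (ISD G a = 2 ^ (a - 1) * sumConn G (-a) ↔ ∀ u v : V, G.Reachable u v → G.degree u = G.degree v)) := by
  classical
  have hterm : ∀ e ∈ G.edgeFinset,
      Sym2.lift ⟨fun u v => 1 / ((G.degree u : ℝ) ^ a + (G.degree v : ℝ) ^ a),
        fun u v => by simp [add_comm]⟩ e ≤
      2 ^ (a - 1) * Sym2.lift ⟨fun u v => ((G.degree u : ℝ) + (G.degree v : ℝ)) ^ (-a),
        fun u v => by simp [add_comm]⟩ e := by
    intro e he
    induction e using Sym2.ind with
    | _ u v =>
      simp only [Sym2.lift_mk]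
      exact term_le a ha (by exact_mod_cast hiso u) (by exact_mod_cast hiso v)
  have hsum : ISD G a ≤ 2 ^ (a - 1) * sumConn G (-a) := by
    rw [ISD, sumConn, Finset.mul_sum]
    exact Finset.sum_le_sum hterm
  refine ⟨hsum, ?_⟩
  rw [ISD, sumConn, Finset.mul_sum, Finset.sum_eq_sum_iff_of_le hterm]
  constructor
  · intro h u v huv
    obtain ⟨p⟩ := huv
    induction p with
    | nil => rfl
    | cons hadj p ih =>
      rename_i x y z
      have hxy : G.degree x = G.degree y := by
        have hmem : s(x, y) ∈ G.edgeFinset := by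
          rw [SimpleGraph.mem_edgeFinset, SimpleGraph.mem_edgeSet]; exact hadj
        have := h _ hmem
        simp only [Sym2.lift_mk] at this
        have := (term_eq_iff a ha (x := (G.degree x : ℝ)) (y := (G.degree y : ℝ))
          (by exact_mod_cast hiso x) (by exact_mod_cast hiso y)).mp this
        exact_mod_cast this
      exact hxy.trans ih
  · intro h e he
    induction e using Sym2.ind with
    | _ u v =>
      rw [SimpleGraph.mem_edgeFinset, SimpleGraph.mem_edgeSet] at he
      simp only [Sym2.lift_mk]
      rw [term_eq_iff a ha (by exact_mod_cast hiso u) (by exact_mod_cast hiso v)]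
      exact_mod_cast h u v he.reachable
end

section
/- Let G be a finite simple graph without isolated vertices, with maximum degree Δ, and let a > 0 be a real number. Then ISD_a(G) ≥ (1/2)·Δ^{-a}·GA(G), and equality holds if and only if G is regular. -/
open Finset Real

section Aux

variable {Δ a x y : ℝ}

lemma aux_ga_le_one (hx : 0 < x) (hy : 0 < y) :
    2 * Real.sqrt (x * y) / (x + y) ≤ 1 := by
  rw [div_le_one (by positivity), Real.sqrt_mul hx.le]
  nlinarith [sq_nonneg (Real.sqrt x - Real.sqrt y), Real.sq_sqrt hx.le, Real.sq_sqrt hy.le,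
    Real.sqrt_nonneg x, Real.sqrt_nonneg y]

lemma aux_le (hΔ : 0 < Δ) (ha : 0 < a) (hx : 0 < x) (hy : 0 < y)
    (hxΔ : x ≤ Δ) (hyΔ : y ≤ Δ) :
    1 / 2 * Δ ^ (-a) * (2 * Real.sqrt (x * y) / (x + y)) ≤ 1 / (x ^ a + y ^ a) := by
  have hxa : x ^ a ≤ Δ ^ a := Real.rpow_le_rpow hx.le hxΔ ha.le
  have hya : y ^ a ≤ Δ ^ a := Real.rpow_le_rpow hy.le hyΔ ha.le
  have hpos : (0:ℝ) < x ^ a + y ^ a := by positivity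
  have hΔa : (0:ℝ) < Δ ^ a := by positivity
  have h2 : 1 / (2 * Δ ^ a) ≤ 1 / (x ^ a + y ^ a) :=
    one_div_le_one_div_of_le hpos (by linarith)
  have hneg : Δ ^ (-a) = (Δ ^ a)⁻¹ := Real.rpow_neg hΔ.le a
  calc 1 / 2 * Δ ^ (-a) * (2 * Real.sqrt (x * y) / (x + y))
      ≤ 1 / 2 * Δ ^ (-a) * 1 := by
        apply mul_le_mul_of_nonneg_left (aux_ga_le_one hx hy) (by positivity)
    _ = 1 / (2 * Δ ^ a) := by rw [hneg]; field_simp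
    _ ≤ 1 / (x ^ a + y ^ a) := h2

lemma aux_eq (hΔ : 0 < Δ) (ha : 0 < a) (hx : 0 < x) (hy : 0 < y)
    (hxΔ : x ≤ Δ) (hyΔ : y ≤ Δ)
    (heq : 1 / (x ^ a + y ^ a) = 1 / 2 * Δ ^ (-a) * (2 * Real.sqrt (x * y) / (x + y))) :
    x = Δ ∧ y = Δ := by
  have hxa : x ^ a ≤ Δ ^ a := Real.rpow_le_rpow hx.le hxΔ ha.le
  have hya : y ^ a ≤ Δ ^ a := Real.rpow_le_rpow hy.le hyΔ ha.le
  have hpos : (0:ℝ) < x ^ a + y ^ a := by positivity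
  have hΔa : (0:ℝ) < Δ ^ a := by positivity
  have hneg : Δ ^ (-a) = (Δ ^ a)⁻¹ := Real.rpow_neg hΔ.le a
  have hmid : 1 / 2 * Δ ^ (-a) = 1 / (2 * Δ ^ a) := by rw [hneg]; field_simp
  have hg : 2 * Real.sqrt (x * y) / (x + y) ≤ 1 := aux_ga_le_one hx hy
  have hcpos : (0:ℝ) < 1 / 2 * Δ ^ (-a) := by
    rw [hmid]; positivity
  have h2 : 1 / (2 * Δ ^ a) ≤ 1 / (x ^ a + y ^ a) :=
    one_div_le_one_div_of_le hpos (by linarith)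
  -- equality forces g = 1 and x^a + y^a = 2 Δ^a
  have hchain : 1 / 2 * Δ ^ (-a) * (2 * Real.sqrt (x * y) / (x + y)) ≤ 1 / 2 * Δ ^ (-a) :=
    (mul_le_of_le_one_right hcpos.le hg)
  have hge : 1 / 2 * Δ ^ (-a) ≤ 1 / (x ^ a + y ^ a) := hmid ▸ h2
  have h1 : 1 / 2 * Δ ^ (-a) = 1 / (x ^ a + y ^ a) := le_antisymm hge (by linarith [heq ▸ hchain])
  have hg1 : 2 * Real.sqrt (x * y) / (x + y) = 1 := by
    have := heq.trans (by rw [h1]) |>.symm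
    -- 1/(x^a+y^a) = (1/(x^a+y^a)) * g  with positive factor
    have : 1 / 2 * Δ ^ (-a) * (2 * Real.sqrt (x * y) / (x + y)) = 1 / 2 * Δ ^ (-a) := by
      rw [← heq, h1]
    exact mul_left_cancel₀ hcpos.ne' (by linarith [this])
  -- from h1 : x^a + y^a = 2 Δ^a
  have hsum : x ^ a + y ^ a = 2 * Δ ^ a := by
    rw [hmid] at h1
    have := (div_eq_div_iff (by positivity : (2:ℝ) * Δ ^ a ≠ 0) hpos.ne').mp h1
    linarith
  -- from hg1 : x = y
  have hxy : x = y := by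
    have hsq : (Real.sqrt x - Real.sqrt y) ^ 2 = 0 := by
      rw [div_eq_one_iff_eq (by positivity), Real.sqrt_mul hx.le] at hg1
      nlinarith [Real.sq_sqrt hx.le, Real.sq_sqrt hy.le]
    have : Real.sqrt x = Real.sqrt y := by nlinarith [sq_nonneg (Real.sqrt x - Real.sqrt y)]
    calc x = Real.sqrt x ^ 2 := (Real.sq_sqrt hx.le).symm
      _ = Real.sqrt y ^ 2 := by rw [this]
      _ = y := Real.sq_sqrt hy.le
  have hxaeq : x ^ a = Δ ^ a := by rw [hxy] at hsum ⊢; linarith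
  have hxΔ' : x = Δ := by
    by_contra h
    have hlt : x < Δ := lt_of_le_of_ne hxΔ h
    exact absurd hxaeq (ne_of_lt (Real.rpow_lt_rpow hx.le hlt ha))
  exact ⟨hxΔ', hxy ▸ hxΔ'⟩

end Aux

/-- The geometric-arithmetic index `GA(G) = Σ_{uv ∈ E(G)} 2√(d_u d_v)/(d_u + d_v)`. -/
noncomputable def geomArith {V : Type*} [Fintype V] [DecidableEq V] (G : SimpleGraph V)
    [DecidableRel G.Adj] : ℝ :=
  ∑ e ∈ G.edgeFinset,
    Sym2.lift ⟨fun u v => 2 * Real.sqrt ((G.degree u : ℝ) * (G.degree v : ℝ)) /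
        ((G.degree u : ℝ) + (G.degree v : ℝ)),
      fun u v => by dsimp only; rw [mul_comm ((G.degree u : ℝ)), add_comm ((G.degree u : ℝ))]⟩ e

theorem stmt_9 {V : Type*} [Fintype V] [DecidableEq V] [Nonempty V] (G : SimpleGraph V)
    [DecidableRel G.Adj] (hiso : ∀ v : V, 0 < G.degree v) (a : ℝ) (ha : 0 < a) :
    ((1 / 2 * (G.maxDegree : ℝ) ^ (-a) * geomArith G ≤ ISD G a) ∧
    (ISD G a = 1 / 2 * (G.maxDegree : ℝ) ^ (-a) * geomArith G ↔ ∃ k, ∀ v : V, G.degree v = k)) := by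
  classical
  obtain ⟨v₀⟩ := (inferInstance : Nonempty V)
  have hΔpos : (0:ℝ) < (G.maxDegree : ℝ) := by
    exact_mod_cast (hiso v₀).trans_le (G.degree_le_maxDegree v₀)
  have hdeg : ∀ v : V, (0:ℝ) < (G.degree v : ℝ) := fun v => by exact_mod_cast hiso v
  have hdegle : ∀ v : V, (G.degree v : ℝ) ≤ (G.maxDegree : ℝ) := fun v => by
    exact_mod_cast G.degree_le_maxDegree v
  rw [ISD, geomArith, Finset.mul_sum]
  have hptle : ∀ e ∈ G.edgeFinset,
      1 / 2 * (G.maxDegree : ℝ) ^ (-a) *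
        Sym2.lift ⟨fun u v => 2 * Real.sqrt ((G.degree u : ℝ) * (G.degree v : ℝ)) /
          ((G.degree u : ℝ) + (G.degree v : ℝ)),
          fun u v => by dsimp only; rw [mul_comm ((G.degree u : ℝ)), add_comm ((G.degree u : ℝ))]⟩ e
      ≤ Sym2.lift ⟨fun u v => 1 / ((G.degree u : ℝ) ^ a + (G.degree v : ℝ) ^ a),
          fun u v => by simp [add_comm]⟩ e := by
    intro e he
    induction e using Sym2.ind with
    | _ u v =>
      simp only [Sym2.lift_mk]
      exact aux_le hΔpos ha (hdeg u) (hdeg v) (hdegle u) (hdegle v)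
  refine ⟨Finset.sum_le_sum hptle, ?_, ?_⟩
  · intro h
    refine ⟨G.maxDegree, fun v => ?_⟩
    have hpt := (Finset.sum_eq_sum_iff_of_le hptle).mp h.symm
    obtain ⟨w, hw⟩ := (G.degree_pos_iff_exists_adj v).mp (hiso v)
    have he : s(v, w) ∈ G.edgeFinset := by
      rw [SimpleGraph.mem_edgeFinset, SimpleGraph.mem_edgeSet]; exact hw
    have := hpt _ he
    simp only [Sym2.lift_mk] at this
    have := aux_eq hΔpos ha (hdeg v) (hdeg w) (hdegle v) (hdegle w) this.symm
    exact_mod_cast this.1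
  · rintro ⟨k, hk⟩
    have hΔk : G.maxDegree = k :=
      le_antisymm (G.maxDegree_le_of_forall_degree_le k (fun v => (hk v).le))
        ((hk v₀) ▸ G.degree_le_maxDegree v₀)
    have hk0 : (0:ℝ) < (k:ℝ) := by rw [← hΔk]; exact_mod_cast hΔpos
    refine Finset.sum_congr rfl fun e he => ?_
    induction e using Sym2.ind with
    | _ u v =>
      simp only [Sym2.lift_mk, hk, hΔk]
      rw [Real.sqrt_mul_self hk0.le, Real.rpow_neg hk0.le]
      have hka : (0:ℝ) < (k:ℝ) ^ a := Real.rpow_pos_of_pos hk0 a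
      field_simp
end

section
/- Let G be a finite simple graph without isolated vertices, with minimum degree δ, and let a < 0 be a real number. Then ISD_a(G) ≥ (1/2)·δ^{-a}·GA(G), and equality holds if and only if G is regular. -/
open Finset Real

lemma key_ineq {a d x y : ℝ} (ha : a < 0) (hd : 0 < d) (hx : d ≤ x) (hy : d ≤ y) :
    1 / 2 * d ^ (-a) * (2 * Real.sqrt (x * y) / (x + y)) ≤ 1 / (x ^ a + y ^ a) := by
  have hx0 : 0 < x := hd.trans_le hx
  have hy0 : 0 < y := hd.trans_le hy
  have hxa : x ^ a ≤ d ^ a := Real.rpow_le_rpow_of_nonpos hd hx ha.le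
  have hya : y ^ a ≤ d ^ a := Real.rpow_le_rpow_of_nonpos hd hy ha.le
  have hA : 0 < x ^ a + y ^ a := by positivity
  have hda : 0 < d ^ a := Real.rpow_pos_of_pos hd a
  have step1 : 1 / (2 * d ^ a) ≤ 1 / (x ^ a + y ^ a) :=
    one_div_le_one_div_of_le hA (by linarith)
  have step2 : 2 * Real.sqrt (x * y) / (x + y) ≤ 1 := by
    rw [div_le_one (by linarith)]
    rw [Real.sqrt_mul hx0.le]
    nlinarith [Real.sq_sqrt hx0.le, Real.sq_sqrt hy0.le,
      sq_nonneg (Real.sqrt x - Real.sqrt y), Real.sqrt_nonneg x, Real.sqrt_nonneg y]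
  have hneg : d ^ (-a) = (d ^ a)⁻¹ := Real.rpow_neg hd.le a
  have h3 : 1 / 2 * d ^ (-a) * (2 * Real.sqrt (x * y) / (x + y)) ≤ 1 / 2 * d ^ (-a) * 1 := by
    apply mul_le_mul_of_nonneg_left step2
    rw [hneg]; positivity
  calc 1 / 2 * d ^ (-a) * (2 * Real.sqrt (x * y) / (x + y)) ≤ 1 / 2 * d ^ (-a) * 1 := h3
    _ = 1 / (2 * d ^ a) := by rw [hneg]; field_simp
    _ ≤ 1 / (x ^ a + y ^ a) := step1

lemma key_eq {a d x y : ℝ} (ha : a < 0) (hd : 0 < d) (hx : d ≤ x) (hy : d ≤ y)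
    (h : 1 / (x ^ a + y ^ a) = 1 / 2 * d ^ (-a) * (2 * Real.sqrt (x * y) / (x + y))) :
    x = d ∧ y = d := by
  have hx0 : 0 < x := hd.trans_le hx
  have hy0 : 0 < y := hd.trans_le hy
  have hxa : x ^ a ≤ d ^ a := Real.rpow_le_rpow_of_nonpos hd hx ha.le
  have hya : y ^ a ≤ d ^ a := Real.rpow_le_rpow_of_nonpos hd hy ha.le
  have hA : 0 < x ^ a + y ^ a := by positivity
  have hda : 0 < d ^ a := Real.rpow_pos_of_pos hd a
  have hneg : d ^ (-a) = (d ^ a)⁻¹ := Real.rpow_neg hd.le a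
  have step2 : 2 * Real.sqrt (x * y) / (x + y) ≤ 1 := by
    rw [div_le_one (by linarith)]
    rw [Real.sqrt_mul hx0.le]
    nlinarith [Real.sq_sqrt hx0.le, Real.sq_sqrt hy0.le,
      sq_nonneg (Real.sqrt x - Real.sqrt y), Real.sqrt_nonneg x, Real.sqrt_nonneg y]
  have hgle : 1 / 2 * d ^ (-a) * (2 * Real.sqrt (x * y) / (x + y)) ≤ 1 / (2 * d ^ a) := by
    calc 1 / 2 * d ^ (-a) * (2 * Real.sqrt (x * y) / (x + y)) ≤ 1 / 2 * d ^ (-a) * 1 := by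
            apply mul_le_mul_of_nonneg_left step2
            rw [hneg]; positivity
      _ = 1 / (2 * d ^ a) := by rw [hneg]; field_simp
  have hfle : 1 / (2 * d ^ a) ≤ 1 / (x ^ a + y ^ a) :=
    one_div_le_one_div_of_le hA (by linarith)
  have hmid : 1 / (2 * d ^ a) = 1 / (x ^ a + y ^ a) := le_antisymm hfle (by rw [h]; exact hgle)
  have hsum : x ^ a + y ^ a = 2 * d ^ a := by
    field_simp at hmid; linarith
  have hxd : x ^ a = d ^ a := by linarith
  have hyd : y ^ a = d ^ a := by linarith
  constructor
  · by_contra hne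
    have : d < x := lt_of_le_of_ne hx (Ne.symm hne)
    exact absurd hxd (ne_of_lt (Real.rpow_lt_rpow_of_neg hd this ha))
  · by_contra hne
    have : d < y := lt_of_le_of_ne hy (Ne.symm hne)
    exact absurd hyd (ne_of_lt (Real.rpow_lt_rpow_of_neg hd this ha))

lemma key_eq' {a d : ℝ} (hd : 0 < d) :
    1 / (d ^ a + d ^ a) = 1 / 2 * d ^ (-a) * (2 * Real.sqrt (d * d) / (d + d)) := by
  have hda : 0 < d ^ a := Real.rpow_pos_of_pos hd a
  rw [Real.sqrt_mul_self hd.le, Real.rpow_neg hd.le]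
  field_simp

theorem stmt_10 {V : Type*} [Fintype V] [DecidableEq V] [Nonempty V] (G : SimpleGraph V)
    [DecidableRel G.Adj] (hiso : ∀ v : V, 0 < G.degree v) (a : ℝ) (ha : a < 0) :
    ((1 / 2 * (G.minDegree : ℝ) ^ (-a) * geomArith G ≤ ISD G a) ∧
    (ISD G a = 1 / 2 * (G.minDegree : ℝ) ^ (-a) * geomArith G ↔ ∃ k, ∀ v : V, G.degree v = k)) := by
  have hδ : 0 < G.minDegree := by
    obtain ⟨v, hv⟩ := G.exists_minimal_degree_vertex
    rw [hv]; exact hiso v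
  have hdR : (0 : ℝ) < (G.minDegree : ℝ) := by exact_mod_cast hδ
  have hdeg : ∀ u : V, (G.minDegree : ℝ) ≤ (G.degree u : ℝ) := fun u => by
    exact_mod_cast G.minDegree_le_degree u
  rw [ISD, geomArith, Finset.mul_sum]
  have hle : ∀ e ∈ G.edgeFinset,
      1 / 2 * (G.minDegree : ℝ) ^ (-a) *
        Sym2.lift ⟨fun u v => 2 * Real.sqrt ((G.degree u : ℝ) * (G.degree v : ℝ)) /
          ((G.degree u : ℝ) + (G.degree v : ℝ)),
          fun u v => by dsimp only; rw [mul_comm ((G.degree u : ℝ)), add_comm ((G.degree u : ℝ))]⟩ e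
      ≤ Sym2.lift ⟨fun u v => 1 / ((G.degree u : ℝ) ^ a + (G.degree v : ℝ) ^ a),
          fun u v => by simp [add_comm]⟩ e := by
    intro e _
    induction e using Sym2.ind with
    | _ u v =>
      simp only [Sym2.lift_mk]
      exact key_ineq ha hdR (hdeg u) (hdeg v)
  refine ⟨Finset.sum_le_sum hle, ?_, ?_⟩
  · intro hsum
    have hall := (Finset.sum_eq_sum_iff_of_le hle).mp hsum.symm
    refine ⟨G.minDegree, fun v => ?_⟩
    obtain ⟨w, hw⟩ : ∃ w, G.Adj v w := by
      rw [← SimpleGraph.degree_pos_iff_exists_adj]; exact hiso v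
    have hme : s(v, w) ∈ G.edgeFinset := by
      rw [SimpleGraph.mem_edgeFinset, SimpleGraph.mem_edgeSet]; exact hw
    have h1 := hall _ hme
    simp only [Sym2.lift_mk] at h1
    have h2 := key_eq ha hdR (hdeg v) (hdeg w) h1.symm
    exact_mod_cast h2.1
  · rintro ⟨k, hk⟩
    have hkpos : 0 < k := by rw [← hk (Classical.arbitrary V)]; exact hiso _
    have hδk : G.minDegree = k := by
      obtain ⟨v, hv⟩ := G.exists_minimal_degree_vertex
      rw [hv, hk v]
    refine Finset.sum_congr rfl ?_
    intro e _
    induction e using Sym2.ind with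
    | _ u v =>
      simp only [Sym2.lift_mk, hk u, hk v, hδk]
      exact key_eq' (by exact_mod_cast hkpos)
end

section
/- Let G be a finite simple graph without isolated vertices with m edges, and let a > 0 be a real number. Then ISD_a(G) + M_1^{a+1}(G) ≥ (5/2)·m, and equality holds if and only if G is a disjoint union of path graphs P_2 (equivalently, every vertex of G has degree 1). -/
open Finset Real

/-- The variable first Zagreb index `M₁^α(G) = Σ_{u ∈ V(G)} d_u^α`. -/
noncomputable def varZagreb1 {V : Type*} [Fintype V] (G : SimpleGraph V)
    [DecidableRel G.Adj] (α : ℝ) : ℝ :=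
  ∑ u : V, (G.degree u : ℝ) ^ α

section Aux

variable {V : Type*} [Fintype V] [DecidableEq V] (G : SimpleGraph V) [DecidableRel G.Adj]

lemma aux_sum_dart_fst (g : V → ℝ) :
    ∑ d : G.Dart, g d.fst = ∑ v, (G.degree v : ℝ) * g v := by
  rw [← Finset.sum_fiberwise_of_maps_to (g := fun d : G.Dart => d.fst)
    (fun d _ => Finset.mem_univ d.fst) (fun d : G.Dart => g d.fst)]
  refine Finset.sum_congr rfl fun v _ => ?_
  rw [Finset.sum_congr rfl (fun d hd => by
        rw [show d.fst = v from (Finset.mem_filter.mp hd).2]),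
    Finset.sum_const, ← G.dart_fst_fiber_card_eq_degree v]
  simp [nsmul_eq_mul]

lemma aux_sum_dart_snd (g : V → ℝ) :
    ∑ d : G.Dart, g d.snd = ∑ d : G.Dart, g d.fst :=
  Fintype.sum_bijective _ (SimpleGraph.Dart.symm_involutive (G := G)).bijective _ _
    (fun d => rfl)

lemma aux_sum_dart_edge (F : Sym2 V → ℝ) :
    ∑ d : G.Dart, F d.edge = ∑ e ∈ G.edgeFinset, 2 * F e := by
  rw [← Finset.sum_fiberwise_of_maps_to (t := G.edgeFinset) (g := fun d : G.Dart => d.edge)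
    (fun d _ => by rw [SimpleGraph.mem_edgeFinset]; exact d.edge_mem)
    (fun d : G.Dart => F d.edge)]
  refine Finset.sum_congr rfl fun e he => ?_
  rw [Finset.sum_congr rfl (fun d hd => by
        rw [show d.edge = e from (Finset.mem_filter.mp hd).2]),
    Finset.sum_const, G.dart_edge_fiber_card e (SimpleGraph.mem_edgeFinset.mp he)]
  simp [nsmul_eq_mul]

lemma aux_edge_sum (g : V → ℝ) :
    ∑ e ∈ G.edgeFinset,
      Sym2.lift ⟨fun u v => g u + g v, fun u v => by simp [add_comm]⟩ e
      = ∑ v, (G.degree v : ℝ) * g v := by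
  have h := aux_sum_dart_edge G
    (Sym2.lift ⟨fun u v => g u + g v, fun u v => by simp [add_comm]⟩)
  have h2 : ∀ d : G.Dart,
      Sym2.lift ⟨fun u v => g u + g v, fun u v => by simp [add_comm]⟩ d.edge
      = g d.fst + g d.snd := fun d => by
    rw [SimpleGraph.Dart.edge, Sym2.lift_mk]
  rw [Finset.sum_congr rfl (fun d _ => h2 d), Finset.sum_add_distrib,
    aux_sum_dart_snd, aux_sum_dart_fst] at h
  have h3 : ∀ e ∈ G.edgeFinset, (2 : ℝ) *
      Sym2.lift ⟨fun u v => g u + g v, fun u v => by simp [add_comm]⟩ e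
      = 2 * Sym2.lift ⟨fun u v => g u + g v, fun u v => by simp [add_comm]⟩ e :=
    fun _ _ => rfl
  rw [← Finset.mul_sum] at h
  linarith [h]

end Aux

lemma aux_key {x : ℝ} (hx : 2 ≤ x) :
    5 / 2 ≤ 1 / x + x ∧ (1 / x + x = 5 / 2 ↔ x = 2) := by
  have hx0 : 0 < x := by linarith
  have h1 : 1 / x * x = 1 := by field_simp
  refine ⟨by nlinarith, ⟨fun h => by nlinarith, fun h => by rw [h]; norm_num⟩⟩

theorem stmt_13 {V : Type*} [Fintype V] [DecidableEq V] [Nonempty V] (G : SimpleGraph V)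
    [DecidableRel G.Adj] (hiso : ∀ v : V, 0 < G.degree v) (a : ℝ) (ha : 0 < a) :
    ((5 / 2 * (G.edgeFinset.card : ℝ) ≤ ISD G a + varZagreb1 G (a + 1)) ∧
    (ISD G a + varZagreb1 G (a + 1) = 5 / 2 * (G.edgeFinset.card : ℝ) ↔
      ∀ v : V, G.degree v = 1)) := by
  -- rewrite varZagreb1 as an edge sum
  have hdeg1 : ∀ v : V, (1 : ℝ) ≤ (G.degree v : ℝ) := fun v => by
    exact_mod_cast hiso v
  have hpow1 : ∀ v : V, (1 : ℝ) ≤ (G.degree v : ℝ) ^ a := fun v =>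
    Real.one_le_rpow (hdeg1 v) ha.le
  have hZ : varZagreb1 G (a + 1)
      = ∑ e ∈ G.edgeFinset,
        Sym2.lift ⟨fun u v => (G.degree u : ℝ) ^ a + (G.degree v : ℝ) ^ a,
          fun u v => by simp [add_comm]⟩ e := by
    rw [aux_edge_sum G (fun v => (G.degree v : ℝ) ^ a)]
    refine Finset.sum_congr rfl fun v _ => ?_
    rw [Real.rpow_add (by exact_mod_cast hiso v : (0:ℝ) < (G.degree v : ℝ)) a 1, Real.rpow_one]
    ring
  set F : Sym2 V → ℝ := Sym2.lift ⟨fun u v => 1 / ((G.degree u : ℝ) ^ a + (G.degree v : ℝ) ^ a)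
      + ((G.degree u : ℝ) ^ a + (G.degree v : ℝ) ^ a),
      fun u v => by simp [add_comm]⟩ with hF
  have hsum : ISD G a + varZagreb1 G (a + 1) = ∑ e ∈ G.edgeFinset, F e := by
    rw [ISD, hZ, ← Finset.sum_add_distrib]
    refine Finset.sum_congr rfl fun e _ => ?_
    induction e using Sym2.ind with
    | _ u v => simp [hF]
  -- pointwise bound
  have hptle : ∀ e ∈ G.edgeFinset, 5 / 2 ≤ F e := by
    intro e he
    induction e using Sym2.ind with
    | _ u v =>
      have hx : 2 ≤ (G.degree u : ℝ) ^ a + (G.degree v : ℝ) ^ a := by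
        linarith [hpow1 u, hpow1 v]
      simpa [hF] using (aux_key hx).1
  have hpteq : ∀ e ∈ G.edgeFinset,
      (F e = 5 / 2 ↔ ∀ v ∈ e, G.degree v = 1) := by
    intro e he
    induction e using Sym2.ind with
    | _ u v =>
      have hx : 2 ≤ (G.degree u : ℝ) ^ a + (G.degree v : ℝ) ^ a := by
        linarith [hpow1 u, hpow1 v]
      have hone : ∀ w : V, (G.degree w : ℝ) ^ a = 1 ↔ G.degree w = 1 := by
        intro w
        constructor
        · intro h
          by_contra hne
          have h2 : (2 : ℝ) ≤ (G.degree w : ℝ) := by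
            have := hiso w
            have : 2 ≤ G.degree w := by omega
            exact_mod_cast this
          have : 1 < (G.degree w : ℝ) ^ a :=
            (Real.one_lt_rpow_iff_of_pos (by linarith)).mpr (Or.inl ⟨by linarith, ha⟩)
          linarith
        · intro h; rw [h]; simp
      have heq : F s(u, v) = 5 / 2 ↔
          (G.degree u : ℝ) ^ a + (G.degree v : ℝ) ^ a = 2 := by
        simpa [hF] using (aux_key hx).2
      rw [heq]
      constructor
      · intro h
        have hu : (G.degree u : ℝ) ^ a = 1 := by linarith [hpow1 u, hpow1 v]
        have hv : (G.degree v : ℝ) ^ a = 1 := by linarith [hpow1 u, hpow1 v]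
        intro w hw
        rw [Sym2.mem_iff] at hw
        rcases hw with rfl | rfl
        · exact (hone w).mp hu
        · exact (hone w).mp hv
      · intro h
        have hu := (hone u).mpr (h u (Sym2.mem_mk_left u v))
        have hv := (hone v).mpr (h v (Sym2.mem_mk_right u v))
        rw [hu, hv]; norm_num
  have hconst : 5 / 2 * (G.edgeFinset.card : ℝ) = ∑ _e ∈ G.edgeFinset, (5 / 2 : ℝ) := by
    rw [Finset.sum_const, nsmul_eq_mul, mul_comm]
  constructor
  · rw [hsum, hconst]
    exact Finset.sum_le_sum hptle
  · rw [hsum, hconst]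
    rw [eq_comm, Finset.sum_eq_sum_iff_of_le hptle]
    constructor
    · intro h v
      obtain ⟨w, hw⟩ : ∃ w, G.Adj v w := by
        have := hiso v
        rw [← SimpleGraph.card_neighborFinset_eq_degree, Finset.card_pos] at this
        obtain ⟨w, hw⟩ := this
        exact ⟨w, (SimpleGraph.mem_neighborFinset G v w).mp hw⟩
      have he : s(v, w) ∈ G.edgeFinset := SimpleGraph.mem_edgeFinset.mpr hw
      exact ((hpteq _ he).mp (h _ he).symm) v (Sym2.mem_mk_left v w)
    · intro h e he
      exact ((hpteq e he).mpr (fun v _ => h v)).symm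
end

section
/- Let G be a finite simple graph without isolated vertices with m edges, and let a < 0 be a real number. Then ISD_a(G) + M_1^{a+1}(G) ≥ 2m. -/
open Finset Real

/-! Since every vertex has positive degree, `d_v^(a+1) = d_v · d_v^a`, and the weighted handshake
lemma turns `M₁^(a+1)(G)` into `Σ_{uv ∈ E} (d_u^a + d_v^a)`. Thus `ISD_a(G) + M₁^(a+1)(G)` is a sum
over the edges of `1/t + t` with `t > 0`, and each such term is at least `2`. -/

namespace SimpleGraph

variable {V : Type*} [Fintype V] [DecidableEq V] (G : SimpleGraph V) [DecidableRel G.Adj]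
  {M : Type*} [AddCommMonoid M]

theorem sum_dart_fst_eq_sum_degree_nsmul (f : V → M) :
    ∑ d : G.Dart, f d.fst = ∑ v, G.degree v • f v := by
  rw [← sum_fiberwise' univ (fun d : G.Dart => d.fst) f]
  simp only [sum_const, dart_fst_fiber_card_eq_degree]

theorem sum_dart_fst_eq_sum_edgeFinset (f : V → M) :
    ∑ d : G.Dart, f d.fst =
      ∑ e ∈ G.edgeFinset, Sym2.lift ⟨fun u v => f u + f v, fun _ _ => add_comm _ _⟩ e := by
  rw [← sum_fiberwise_of_maps_to (t := G.edgeFinset) (g := Dart.edge)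
    (fun d _ => G.mem_edgeFinset.mpr d.edge_mem)]
  refine sum_congr rfl fun e he => ?_
  induction e using Sym2.ind with | h u v => ?_
  let d : G.Dart := ⟨(u, v), G.mem_edgeFinset.mp he⟩
  rw [show s(u, v) = d.edge from rfl, d.edge_fiber, sum_pair d.symm_ne.symm]
  rfl

theorem sum_degree_nsmul_eq_sum_edgeFinset (f : V → M) :
    ∑ v, G.degree v • f v =
      ∑ e ∈ G.edgeFinset, Sym2.lift ⟨fun u v => f u + f v, fun _ _ => add_comm _ _⟩ e := by
  rw [← sum_dart_fst_eq_sum_degree_nsmul, sum_dart_fst_eq_sum_edgeFinset]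

end SimpleGraph

theorem two_le_one_div_add_self {t : ℝ} (ht : 0 < t) : 2 ≤ 1 / t + t := by
  rw [div_add' _ _ _ ht.ne', le_div_iff₀ ht]
  nlinarith [sq_nonneg (t - 1)]

theorem varZagreb1_add_one {V : Type*} [Fintype V] (G : SimpleGraph V) [DecidableRel G.Adj]
    (hiso : ∀ v, 0 < G.degree v) (a : ℝ) :
    varZagreb1 G (a + 1) = ∑ v, G.degree v • (G.degree v : ℝ) ^ a := by
  refine sum_congr rfl fun v _ => ?_
  rw [rpow_add_one (Nat.cast_pos.mpr (hiso v)).ne', nsmul_eq_mul, mul_comm]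

theorem stmt_14_general {V : Type*} [Fintype V] [DecidableEq V] (G : SimpleGraph V)
    [DecidableRel G.Adj] (hiso : ∀ v : V, 0 < G.degree v) (a : ℝ) :
    (2 * (G.edgeFinset.card : ℝ) ≤ ISD G a + varZagreb1 G (a + 1)) := by
  rw [varZagreb1_add_one G hiso, G.sum_degree_nsmul_eq_sum_edgeFinset, ISD, ← sum_add_distrib,
    mul_comm, ← nsmul_eq_mul, ← sum_const]
  refine sum_le_sum fun e _ => ?_
  induction e using Sym2.ind with | h u v => ?_
  have hpos (w : V) : 0 < (G.degree w : ℝ) ^ a := rpow_pos_of_pos (Nat.cast_pos.mpr (hiso w)) a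
  exact two_le_one_div_add_self (add_pos (hpos u) (hpos v))

theorem stmt_14 {V : Type*} [Fintype V] [DecidableEq V] [Nonempty V] (G : SimpleGraph V)
    [DecidableRel G.Adj] (hiso : ∀ v : V, 0 < G.degree v) (a : ℝ) (ha : a < 0) :
    (2 * (G.edgeFinset.card : ℝ) ≤ ISD G a + varZagreb1 G (a + 1)) :=
  stmt_14_general G hiso a
end

section
/- Let G be a finite simple graph without isolated vertices with m edges and minimum degree δ > 1, and let a be a real number with a ≤ -log 2/log δ. Then ISD_a(G) + M_1^{a+1}(G) ≥ (2δ^a + 1/(2δ^a))·m, and equality holds if and only if G is regular. -/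
open Finset Real

/-!
Write `x_e = d_u^a + d_v^a` for an edge `e = uv`. Since `M₁^{a+1}(G) = Σ_u d_u · d_u^a` counts
every `d_u^a` once per incident edge, `ISD_a(G) + M₁^{a+1}(G) = Σ_e (x_e + 1/x_e)`.
As `a < 0`, each `x_e` lies in `(0, 2δ^a]`, and the hypothesis on `a` says exactly that
`2δ^a ≤ 1`. The map `t ↦ t + 1/t` is strictly decreasing on `(0, 1]`, so every summand is at
least `2δ^a + 1/(2δ^a)`, with equality iff both ends of `e` have degree `δ`.
-/

lemma strictAntiOn_add_one_div : StrictAntiOn (fun t : ℝ => t + 1 / t) (Set.Ioc 0 1) := by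
  rintro s ⟨hs, -⟩ t ⟨ht, ht1⟩ hst
  have hdiff : (s + 1 / s) - (t + 1 / t) = (t - s) * (1 - s * t) / (s * t) := by
    field_simp
    ring
  have : 0 < (t - s) * (1 - s * t) / (s * t) :=
    div_pos (mul_pos (by linarith) (by nlinarith)) (by positivity)
  linarith

lemma two_mul_rpow_le_one {x a : ℝ} (hx : 2 ≤ x) (ha : a ≤ -(log 2 / log x)) :
    2 * x ^ a ≤ 1 := by
  have hlog : 0 < log x := log_pos (by linarith)
  have hpow : x ^ (-(log 2 / log x)) = 1 / 2 := by
    rw [rpow_def_of_pos (by linarith), mul_neg, mul_div_cancel₀ _ hlog.ne', exp_neg,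
      exp_log two_pos, one_div]
  have := rpow_le_rpow_of_exponent_le (by linarith : 1 ≤ x) ha
  linarith

def endpointSum {V M : Type*} [AddCommMagma M] (f : V → M) : Sym2 V → M :=
  Sym2.lift ⟨fun u v => f u + f v, fun _ _ => add_comm _ _⟩

@[simp]
lemma endpointSum_mk {V M : Type*} [AddCommMagma M] (f : V → M) (u v : V) :
    endpointSum f s(u, v) = f u + f v :=
  rfl

namespace SimpleGraph

variable {V M : Type*} [Fintype V] [AddCommMonoid M] (G : SimpleGraph V) [DecidableRel G.Adj]

lemma sum_darts_fst [DecidableEq V] (f : V → M) :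
    ∑ d : G.Dart, f d.fst = ∑ v, G.degree v • f v := by
  rw [← sum_fiberwise_of_maps_to (g := fun d : G.Dart => d.fst) (t := univ)
    (fun _ _ => mem_univ _)]
  refine sum_congr rfl fun v _ => ?_
  rw [sum_congr rfl fun d hd => congrArg f (mem_filter.1 hd).2, sum_const,
    G.dart_fst_fiber_card_eq_degree v]

lemma sum_edgeFinset_endpointSum [DecidableEq V] (f : V → M) :
    ∑ e ∈ G.edgeFinset, endpointSum f e = ∑ v, G.degree v • f v := by
  rw [← sum_darts_fst, ← sum_fiberwise_of_maps_to (g := Dart.edge) (t := G.edgeFinset)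
    (fun d _ => mem_edgeFinset.2 d.edge_mem)]
  refine sum_congr rfl fun e he => ?_
  induction e using Sym2.ind with
  | h u v =>
    let d : G.Dart := ⟨(u, v), mem_edgeFinset.1 he⟩
    rw [show s(u, v) = d.edge from rfl, Dart.edge_fiber, sum_pair d.symm_ne.symm]
    rfl

lemma ISD_add_varZagreb1 [DecidableEq V] (hdeg : ∀ v, 0 < G.degree v) (a : ℝ) :
    ISD G a + varZagreb1 G (a + 1) =
      ∑ e ∈ G.edgeFinset, (endpointSum (fun v => (G.degree v : ℝ) ^ a) e +
        1 / endpointSum (fun v => (G.degree v : ℝ) ^ a) e) := by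
  have hISD :
      ISD G a = ∑ e ∈ G.edgeFinset, 1 / endpointSum (fun v => (G.degree v : ℝ) ^ a) e :=
    sum_congr rfl fun e _ => by induction e using Sym2.ind; rfl
  have hZagreb : varZagreb1 G (a + 1) =
      ∑ e ∈ G.edgeFinset, endpointSum (fun v => (G.degree v : ℝ) ^ a) e := by
    rw [sum_edgeFinset_endpointSum, varZagreb1]
    refine sum_congr rfl fun v _ => ?_
    rw [nsmul_eq_mul, rpow_add_one (by exact_mod_cast (hdeg v).ne'), mul_comm]
  rw [hISD, hZagreb, ← sum_add_distrib]
  exact sum_congr rfl fun _ _ => add_comm _ _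

variable {G}

lemma rpow_degree_le_minDegree_rpow {a : ℝ} (hδ : 0 < G.minDegree) (ha : a ≤ 0) (v : V) :
    (G.degree v : ℝ) ^ a ≤ (G.minDegree : ℝ) ^ a :=
  rpow_le_rpow_of_nonpos (by exact_mod_cast hδ) (by exact_mod_cast G.minDegree_le_degree v) ha

lemma endpointSum_rpow_degree_mem_Ioc {a : ℝ} (hδ : 0 < G.minDegree) (ha : a ≤ 0)
    (e : Sym2 V) :
    endpointSum (fun v => (G.degree v : ℝ) ^ a) e ∈
      Set.Ioc 0 (2 * (G.minDegree : ℝ) ^ a) := by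
  induction e using Sym2.ind with
  | h u v =>
    have hpos (w : V) : 0 < (G.degree w : ℝ) ^ a :=
      rpow_pos_of_pos (by exact_mod_cast hδ.trans_le (G.minDegree_le_degree w)) a
    have hu := rpow_degree_le_minDegree_rpow hδ ha u
    have hv := rpow_degree_le_minDegree_rpow hδ ha v
    constructor <;> simp only [endpointSum_mk] <;> linarith [hpos u, hpos v]

lemma endpointSum_rpow_degree_eq_iff {a : ℝ} (hδ : 0 < G.minDegree) (ha : a < 0) (u v : V) :
    endpointSum (fun v => (G.degree v : ℝ) ^ a) s(u, v) = 2 * (G.minDegree : ℝ) ^ a ↔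
      G.degree u = G.minDegree ∧ G.degree v = G.minDegree := by
  have hinj (w : V) :
      (G.degree w : ℝ) ^ a = (G.minDegree : ℝ) ^ a ↔ G.degree w = G.minDegree := by
    rw [rpow_left_inj (Nat.cast_nonneg _) (Nat.cast_nonneg _) ha.ne, Nat.cast_inj]
  rw [endpointSum_mk, ← hinj, ← hinj]
  constructor
  · intro h
    have hu := rpow_degree_le_minDegree_rpow hδ ha.le u
    have hv := rpow_degree_le_minDegree_rpow hδ ha.le v
    constructor <;> linarith
  · rintro ⟨hu, hv⟩
    rw [hu, hv, two_mul]

lemma forall_adj_degree_eq_minDegree_iff (hdeg : ∀ v, 0 < G.degree v) :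
    (∀ u v, G.Adj u v → G.degree u = G.minDegree ∧ G.degree v = G.minDegree) ↔
      ∃ k, ∀ v, G.degree v = k := by
  constructor
  · intro h
    refine ⟨G.minDegree, fun v => ?_⟩
    obtain ⟨w, hvw⟩ := (G.degree_pos_iff_exists_adj v).1 (hdeg v)
    exact (h v w hvw).1
  · rintro ⟨k, hk⟩ u v -
    have : Nonempty V := ⟨u⟩
    have hδ : G.minDegree = k := IsRegularOfDegree.minDegree_eq (G := G) hk
    exact ⟨hδ ▸ hk u, hδ ▸ hk v⟩

end SimpleGraph

theorem stmt_16_general {V : Type*} [Fintype V] [DecidableEq V] (G : SimpleGraph V)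
    [DecidableRel G.Adj] (hδ : 1 < G.minDegree) (a : ℝ)
    (ha : a ≤ -(Real.log 2 / Real.log (G.minDegree : ℝ))) :
    (((2 * (G.minDegree : ℝ) ^ a + 1 / (2 * (G.minDegree : ℝ) ^ a)) * (G.edgeFinset.card : ℝ) ≤
      ISD G a + varZagreb1 G (a + 1)) ∧
    (ISD G a + varZagreb1 G (a + 1) =
        (2 * (G.minDegree : ℝ) ^ a + 1 / (2 * (G.minDegree : ℝ) ^ a)) * (G.edgeFinset.card : ℝ) ↔
      ∃ k, ∀ v : V, G.degree v = k)) := by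
  have hδ0 : 0 < G.minDegree := zero_lt_one.trans hδ
  have hdeg (v : V) : 0 < G.degree v := hδ0.trans_le (G.minDegree_le_degree v)
  have hδa : 2 * (G.minDegree : ℝ) ^ a ≤ 1 := two_mul_rpow_le_one (by exact_mod_cast hδ) ha
  have ha0 : a < 0 := ha.trans_lt <| neg_neg_of_pos <|
    div_pos (log_pos one_lt_two) (log_pos (by exact_mod_cast hδ))
  set x := endpointSum (fun v => (G.degree v : ℝ) ^ a)
  set c := 2 * (G.minDegree : ℝ) ^ a
  have hc : c ∈ Set.Ioc 0 1 := ⟨by positivity, hδa⟩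
  have hx (e : Sym2 V) : x e ∈ Set.Ioc 0 1 :=
    Set.Ioc_subset_Ioc_right hδa (G.endpointSum_rpow_degree_mem_Ioc hδ0 ha0.le e)
  have hterm (e : Sym2 V) : c + 1 / c ≤ x e + 1 / x e :=
    strictAntiOn_add_one_div.antitoneOn (hx e) hc
      (G.endpointSum_rpow_degree_mem_Ioc hδ0 ha0.le e).2
  have hconst : (c + 1 / c) * (G.edgeFinset.card : ℝ) = ∑ _e ∈ G.edgeFinset, (c + 1 / c) := by
    rw [sum_const, nsmul_eq_mul, mul_comm]
  rw [G.ISD_add_varZagreb1 hdeg, hconst]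
  refine ⟨sum_le_sum fun e _ => hterm e, ?_⟩
  rw [eq_comm, sum_eq_sum_iff_of_le fun e _ => hterm e,
    ← G.forall_adj_degree_eq_minDegree_iff hdeg]
  simp only [Sym2.forall, SimpleGraph.mem_edgeFinset, SimpleGraph.mem_edgeSet,
    ← G.endpointSum_rpow_degree_eq_iff hδ0 ha0]
  exact forall₃_congr fun u v _ => eq_comm.trans (strictAntiOn_add_one_div.injOn.eq_iff (hx _) hc)

theorem stmt_16 {V : Type*} [Fintype V] [DecidableEq V] [Nonempty V] (G : SimpleGraph V)
    [DecidableRel G.Adj] (hiso : ∀ v : V, 0 < G.degree v) (hδ : 1 < G.minDegree) (a : ℝ)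
    (ha : a ≤ -(Real.log 2 / Real.log (G.minDegree : ℝ))) :
    (((2 * (G.minDegree : ℝ) ^ a + 1 / (2 * (G.minDegree : ℝ) ^ a)) * (G.edgeFinset.card : ℝ) ≤
      ISD G a + varZagreb1 G (a + 1)) ∧
    (ISD G a + varZagreb1 G (a + 1) =
        (2 * (G.minDegree : ℝ) ^ a + 1 / (2 * (G.minDegree : ℝ) ^ a)) * (G.edgeFinset.card : ℝ) ↔
      ∃ k, ∀ v : V, G.degree v = k)) :=
  stmt_16_general G hδ a ha
end

section
/- Let G be a finite simple graph without isolated vertices with m edges and maximum degree Δ, and let a > 0 be a real number. Then ISD_a(G) + M_1^{a+1}(G) ≤ (2Δ^a + 1/(2Δ^a))·m, and equality holds if and only if G is regular. -/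
open Finset Real

/-- Double counting via darts: summing a symmetrized vertex function over edges. -/
lemma sum_lift_add {V : Type*} [Fintype V] [DecidableEq V] (G : SimpleGraph V)
    [DecidableRel G.Adj] (f : V → ℝ) :
    ∑ e ∈ G.edgeFinset,
      Sym2.lift ⟨fun u v => f u + f v, fun u v => by simp [add_comm]⟩ e
      = ∑ v : V, (G.degree v : ℝ) * f v := by
  have h1 : ∑ d : G.Dart, f d.fst = ∑ v : V, (G.degree v : ℝ) * f v := by
    rw [← Finset.sum_fiberwise_of_maps_to (g := fun d : G.Dart => d.fst)
        (t := Finset.univ) (fun d _ => Finset.mem_univ _)]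
    refine Finset.sum_congr rfl fun v _ => ?_
    have hconst : ∀ d ∈ Finset.univ.filter (fun d : G.Dart => d.fst = v),
        f d.fst = f v := by
      intro d hd
      rw [Finset.mem_filter] at hd
      rw [hd.2]
    rw [Finset.sum_congr rfl hconst, Finset.sum_const, ← G.dart_fst_fiber_card_eq_degree v]
    simp [nsmul_eq_mul]
  have h2 : ∑ d : G.Dart, f d.fst = ∑ e ∈ G.edgeFinset,
      Sym2.lift ⟨fun u v => f u + f v, fun u v => by simp [add_comm]⟩ e := by
    rw [← Finset.sum_fiberwise_of_maps_to (g := fun d : G.Dart => d.edge)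
        (t := G.edgeFinset) (fun d _ => by simp [d.edge_mem])]
    refine Finset.sum_congr rfl fun e he => ?_
    rw [SimpleGraph.mem_edgeFinset] at he
    induction e using Sym2.ind with
    | _ u v =>
      rw [SimpleGraph.mem_edgeSet] at he
      have hd : (⟨(u, v), he⟩ : G.Dart).edge = s(u, v) := rfl
      have hfib : Finset.univ.filter (fun d : G.Dart => d.edge = s(u, v))
          = {(⟨(u, v), he⟩ : G.Dart), (⟨(u, v), he⟩ : G.Dart).symm} := by
        rw [← hd]
        exact SimpleGraph.Dart.edge_fiber _
      rw [hfib, Finset.sum_pair ((⟨(u, v), he⟩ : G.Dart).symm_ne.symm)]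
      simp [SimpleGraph.Dart.symm]
  rw [← h2, h1]

lemma key_le_s17 {x X : ℝ} (hx : 1 ≤ x) (hX : x ≤ X) : x + 1 / x ≤ X + 1 / X := by
  have hx0 : 0 < x := lt_of_lt_of_le one_pos hx
  have hX0 : 0 < X := hx0.trans_le hX
  have key : X + 1 / X - (x + 1 / x) = (X - x) * (x * X - 1) / (x * X) := by
    field_simp; ring
  have h1 : (0:ℝ) ≤ (X - x) * (x * X - 1) / (x * X) :=
    div_nonneg (mul_nonneg (by linarith) (by nlinarith)) (by positivity)
  linarith

lemma key_eq_s17 {x X : ℝ} (hx : 2 ≤ x) (hX : x ≤ X) (h : x + 1 / x = X + 1 / X) : x = X := by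
  have hx0 : 0 < x := by linarith
  have hX0 : 0 < X := by linarith
  have key : X + 1 / X - (x + 1 / x) = (X - x) * (x * X - 1) / (x * X) := by
    field_simp; ring
  rw [h, sub_self] at key
  have h3 : 0 < x * X - 1 := by nlinarith
  have h2 : (X - x) * (x * X - 1) = 0 := by
    have hne : x * X ≠ 0 := by positivity
    have h0 : (X - x) * (x * X - 1) / (x * X) = 0 := key.symm
    rcases div_eq_zero_iff.mp h0 with h' | h'
    · exact h'
    · exact absurd h' hne
  have h4 : X - x = 0 := by
    rcases mul_eq_zero.mp h2 with h' | h'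
    · exact h'
    · linarith
  linarith

theorem stmt_17 {V : Type*} [Fintype V] [DecidableEq V] [Nonempty V] (G : SimpleGraph V)
    [DecidableRel G.Adj] (hiso : ∀ v : V, 0 < G.degree v) (a : ℝ) (ha : 0 < a) :
    ((ISD G a + varZagreb1 G (a + 1) ≤
      (2 * (G.maxDegree : ℝ) ^ a + 1 / (2 * (G.maxDegree : ℝ) ^ a)) * (G.edgeFinset.card : ℝ)) ∧
    (ISD G a + varZagreb1 G (a + 1) =
        (2 * (G.maxDegree : ℝ) ^ a + 1 / (2 * (G.maxDegree : ℝ) ^ a)) * (G.edgeFinset.card : ℝ) ↔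
      ∃ k, ∀ v : V, G.degree v = k)) := by
  obtain ⟨v₀⟩ := ‹Nonempty V›
  set Δ : ℝ := (G.maxDegree : ℝ) with hΔdef
  have hdleΔ : ∀ v : V, (G.degree v : ℝ) ≤ Δ := fun v => by
    rw [hΔdef]; exact_mod_cast G.degree_le_maxDegree v
  have hd1 : ∀ v : V, (1:ℝ) ≤ (G.degree v : ℝ) := fun v => by
    exact_mod_cast hiso v
  have hΔ1 : (1:ℝ) ≤ Δ := (hd1 v₀).trans (hdleΔ v₀)
  have hpa : ∀ v : V, (1:ℝ) ≤ (G.degree v : ℝ) ^ a := fun v =>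
    Real.one_le_rpow (hd1 v) ha.le
  have hpaΔ : ∀ v : V, (G.degree v : ℝ) ^ a ≤ Δ ^ a := fun v =>
    Real.rpow_le_rpow (by positivity) (hdleΔ v) ha.le
  set X : ℝ := 2 * Δ ^ a with hXdef
  have hΔa1 : (1:ℝ) ≤ Δ ^ a := Real.one_le_rpow hΔ1 ha.le
  have hX0 : (0:ℝ) < X := by positivity
  have hz : varZagreb1 G (a + 1)
      = ∑ e ∈ G.edgeFinset,
        Sym2.lift ⟨fun u v => (G.degree u : ℝ) ^ a + (G.degree v : ℝ) ^ a,
          fun u v => by simp [add_comm]⟩ e := by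
    rw [sum_lift_add G (fun u => (G.degree u : ℝ) ^ a)]
    refine Finset.sum_congr rfl fun v _ => ?_
    have hne : (G.degree v : ℝ) ≠ 0 := by
      have := hd1 v; linarith
    rw [Real.rpow_add_one hne]
    ring
  have hsum : ISD G a + varZagreb1 G (a + 1)
      = ∑ e ∈ G.edgeFinset,
        (Sym2.lift ⟨fun u v => 1 / ((G.degree u : ℝ) ^ a + (G.degree v : ℝ) ^ a),
            fun u v => by simp [add_comm]⟩ e
         + Sym2.lift ⟨fun u v => (G.degree u : ℝ) ^ a + (G.degree v : ℝ) ^ a,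
            fun u v => by simp [add_comm]⟩ e) := by
    rw [ISD, hz, ← Finset.sum_add_distrib]
  have hterm : ∀ e ∈ G.edgeFinset,
      (Sym2.lift ⟨fun u v => 1 / ((G.degree u : ℝ) ^ a + (G.degree v : ℝ) ^ a),
          fun u v => by simp [add_comm]⟩ e
       + Sym2.lift ⟨fun u v => (G.degree u : ℝ) ^ a + (G.degree v : ℝ) ^ a,
          fun u v => by simp [add_comm]⟩ e) ≤ X + 1 / X := by
    intro e he
    induction e using Sym2.ind with
    | _ u v =>
      simp only [Sym2.lift_mk]
      have h1 : (2:ℝ) ≤ (G.degree u : ℝ) ^ a + (G.degree v : ℝ) ^ a := by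
        linarith [hpa u, hpa v]
      have h2 : (G.degree u : ℝ) ^ a + (G.degree v : ℝ) ^ a ≤ X := by
        rw [hXdef]; linarith [hpaΔ u, hpaΔ v]
      have := key_le_s17 (x := (G.degree u : ℝ) ^ a + (G.degree v : ℝ) ^ a) (X := X)
        (by linarith) h2
      linarith
  have hRHS : (X + 1 / X) * (G.edgeFinset.card : ℝ)
      = ∑ _e ∈ G.edgeFinset, (X + 1 / X) := by
    rw [Finset.sum_const, nsmul_eq_mul, mul_comm]
  constructor
  · rw [hsum]
    calc _ ≤ ∑ _e ∈ G.edgeFinset, (X + 1 / X) := Finset.sum_le_sum hterm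
      _ = _ := by rw [← hRHS]
  · constructor
    · intro heq
      rw [hsum] at heq
      have heq' : (∑ e ∈ G.edgeFinset,
          (Sym2.lift ⟨fun u v => 1 / ((G.degree u : ℝ) ^ a + (G.degree v : ℝ) ^ a),
              fun u v => by simp [add_comm]⟩ e
           + Sym2.lift ⟨fun u v => (G.degree u : ℝ) ^ a + (G.degree v : ℝ) ^ a,
              fun u v => by simp [add_comm]⟩ e))
          = ∑ _e ∈ G.edgeFinset, (X + 1 / X) := by
        rw [← hRHS]; exact heq
      have hall := (Finset.sum_eq_sum_iff_of_le hterm).mp heq'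
      refine ⟨G.maxDegree, fun v => ?_⟩
      obtain ⟨w, hw⟩ := (G.degree_pos_iff_exists_adj v).mp (hiso v)
      have hmem : s(v, w) ∈ G.edgeFinset := by
        rw [SimpleGraph.mem_edgeFinset, SimpleGraph.mem_edgeSet]; exact hw
      have h := hall _ hmem
      simp only [Sym2.lift_mk] at h
      have h1 : (2:ℝ) ≤ (G.degree v : ℝ) ^ a + (G.degree w : ℝ) ^ a := by
        linarith [hpa v, hpa w]
      have h2 : (G.degree v : ℝ) ^ a + (G.degree w : ℝ) ^ a ≤ X := by
        rw [hXdef]; linarith [hpaΔ v, hpaΔ w]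
      have hx : (G.degree v : ℝ) ^ a + (G.degree w : ℝ) ^ a = X :=
        key_eq_s17 h1 h2 (by linarith)
      have hva : (G.degree v : ℝ) ^ a = Δ ^ a := by
        rw [hXdef] at hx
        linarith [hpaΔ v, hpaΔ w]
      by_contra hne
      have hlt : G.degree v < G.maxDegree :=
        lt_of_le_of_ne (G.degree_le_maxDegree v) hne
      have : (G.degree v : ℝ) ^ a < Δ ^ a :=
        Real.rpow_lt_rpow (by positivity) (by rw [hΔdef]; exact_mod_cast hlt) ha
      linarith
    · rintro ⟨k, hk⟩
      have hΔk : G.maxDegree = k :=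
        le_antisymm (G.maxDegree_le_of_forall_degree_le k fun v => (hk v).le)
          ((hk v₀) ▸ G.degree_le_maxDegree v₀)
      rw [hsum, hRHS]
      refine Finset.sum_congr rfl fun e he => ?_
      induction e using Sym2.ind with
      | _ u v =>
        simp only [Sym2.lift_mk, hk u, hk v]
        have hX' : (k : ℝ) ^ a + (k : ℝ) ^ a = X := by
          rw [hXdef, hΔdef, hΔk]; ring
        rw [hX']
        ring
end
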